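/- arXiv:math/0309041 — 5 statements merged into one kernel-verified Lean document; each statement's English description precedes it below -/
import Mathlib

section
/- Consider the two-parameter Poisson-Dirichlet urn scheme on the finite space {1,...,r} (r ≥ 2) with uniform base measure ν(l) = 1/r, parameters 0 ≤ α < 1 and θ > -α, where P{X_1 = l} = 1/r and the conditional law of X_{i+1} given X_1,...,X_i puts mass (θ + α·n(p_i))/(θ+i) on fresh draws from ν and mass (e_{j,i} - α)/(θ+i) on each previously seen distinct value X_j*. Then P{X_1=1, X_2=2, X_3=1} = (θ+α)((θ+2α)/r + 1-α)/(r²(θ+1)(θ+2)) and P{X_1=1, X_2=1, X_3=2} = ((θ+α)/r + 1-α)(θ+α)/(r²(θ+1)(θ+2)); consequently these two probabilities are equal if and only if α = 0, so the sequence fails to be exchangeable whenever α ≠ 0. -/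
/-!
A value seen once before, at the third draw, receives the extra fresh-draw mass `α / r` of the
second distinct value; this is the only difference between the orders `1, 2, 1` and `1, 1, 2`,
so the two probabilities differ by `α (θ + α) / (r³ (θ + 1) (θ + 2))`.
-/

/-- Conditional law of the next draw for the two-parameter Poisson–Dirichlet urn over the
finite space `{1,…,r}` with uniform (atomic) base measure `ν(l) = 1/r`: given the history
`hist`, the next value is `x` with probability
`((θ + α·n)·(1/r) + (count of x in hist − α)·1{x ∈ hist}) / (θ + |hist|)`,
where `n` is the number of distinct values in the history. -/
noncomputable def pdCond (α θ : ℝ) (r : ℕ) (hist : List ℕ) (x : ℕ) : ℝ :=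
  ((θ + α * hist.dedup.length) * (1 / r) +
      (if x ∈ hist then ((hist.count x : ℝ) - α) else 0)) / (θ + hist.length)

/-- Joint probability of the first three draws. -/
noncomputable def pdJoint3 (α θ : ℝ) (r : ℕ) (x1 x2 x3 : ℕ) : ℝ :=
  (1 / r) * pdCond α θ r [x1] x2 * pdCond α θ r [x1, x2] x3

section PdUrn

variable (α θ : ℝ) (r : ℕ)

theorem pdCond_of_mem {hist : List ℕ} {x : ℕ} (hx : x ∈ hist) :
    pdCond α θ r hist x =
      ((θ + α * hist.dedup.length) / r + hist.count x - α) / (θ + hist.length) := by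
  simp only [pdCond, if_pos hx]
  ring

theorem pdCond_of_not_mem {hist : List ℕ} {x : ℕ} (hx : x ∉ hist) :
    pdCond α θ r hist x = (θ + α * hist.dedup.length) / r / (θ + hist.length) := by
  simp only [pdCond, if_neg hx]
  ring

variable {a b : ℕ}

theorem pdCond_singleton_self : pdCond α θ r [a] a = ((θ + α) / r + 1 - α) / (θ + 1) := by
  rw [pdCond_of_mem _ _ _ (List.mem_singleton_self a)]
  norm_num

theorem pdCond_singleton_of_ne (h : b ≠ a) : pdCond α θ r [a] b = (θ + α) / r / (θ + 1) := by
  rw [pdCond_of_not_mem _ _ _ (by simpa using h)]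
  norm_num

theorem pdCond_pair_left (hab : a ≠ b) :
    pdCond α θ r [a, b] a = ((θ + 2 * α) / r + 1 - α) / (θ + 2) := by
  rw [pdCond_of_mem _ _ _ List.mem_cons_self, List.dedup_eq_self.2 (by simpa using hab)]
  have hcount : [a, b].count a = 1 := by simp [hab.symm]
  norm_num [hcount, mul_comm α]

theorem pdCond_pair_self_of_ne (hab : a ≠ b) :
    pdCond α θ r [a, a] b = (θ + α) / r / (θ + 2) := by
  rw [pdCond_of_not_mem _ _ _ (by simpa using hab.symm)]
  norm_num

-- No side conditions are needed: with `x / 0 = 0` both sides vanish when a denominator does.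
theorem pdJoint3_aba (hab : a ≠ b) :
    pdJoint3 α θ r a b a =
      (θ + α) * ((θ + 2 * α) / r + 1 - α) / (r ^ 2 * (θ + 1) * (θ + 2)) := by
  rw [pdJoint3, pdCond_singleton_of_ne α θ r hab.symm, pdCond_pair_left α θ r hab]
  simp only [div_eq_mul_inv, mul_inv]
  ring

theorem pdJoint3_aab (hab : a ≠ b) :
    pdJoint3 α θ r a a b =
      ((θ + α) / r + 1 - α) * (θ + α) / (r ^ 2 * (θ + 1) * (θ + 2)) := by
  rw [pdJoint3, pdCond_singleton_self, pdCond_pair_self_of_ne α θ r hab]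
  simp only [div_eq_mul_inv, mul_inv]
  ring

theorem pdJoint3_aba_sub_aab (hab : a ≠ b) :
    pdJoint3 α θ r a b a - pdJoint3 α θ r a a b =
      α * (θ + α) / (r ^ 3 * (θ + 1) * (θ + 2)) := by
  rw [pdJoint3_aba α θ r hab, pdJoint3_aab α θ r hab]
  simp only [div_eq_mul_inv, mul_inv]
  ring

theorem pdJoint3_aba_eq_aab_iff (hab : a ≠ b) (hr : r ≠ 0) (hθα : θ + α ≠ 0)
    (hθ1 : θ + 1 ≠ 0) (hθ2 : θ + 2 ≠ 0) :
    pdJoint3 α θ r a b a = pdJoint3 α θ r a a b ↔ α = 0 := by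
  rw [← sub_eq_zero, pdJoint3_aba_sub_aab α θ r hab]
  simp [hr, hθα, hθ1, hθ2]

end PdUrn

theorem pd_urn_not_exchangeable_atomic_general (α θ : ℝ) (r : ℕ)
    (hα1 : α < 1) (hθ : -α < θ) (hr : 2 ≤ r) :
    pdJoint3 α θ r 1 2 1 =
      (θ + α) * ((θ + 2*α)/r + 1 - α) / (r^2 * (θ + 1) * (θ + 2)) ∧
    pdJoint3 α θ r 1 1 2 =
      ((θ + α)/r + 1 - α) * (θ + α) / (r^2 * (θ + 1) * (θ + 2)) ∧
    (pdJoint3 α θ r 1 2 1 = pdJoint3 α θ r 1 1 2 ↔ α = 0) := by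
  have hr0 : r ≠ 0 := by omega
  have hθα : 0 < θ + α := by linarith
  have hθ1 : 0 < θ + 1 := by linarith
  have hθ2 : 0 < θ + 2 := by linarith
  exact ⟨pdJoint3_aba α θ r (by decide), pdJoint3_aab α θ r (by decide),
    pdJoint3_aba_eq_aab_iff α θ r (by decide) hr0 hθα.ne' hθ1.ne' hθ2.ne'⟩

/-- For the two-parameter Poisson–Dirichlet urn over `{1,…,r}` (`r ≥ 2`) with uniform
atomic base measure, `P{X₁=1, X₂=2, X₃=1} = (θ+α)((θ+2α)/r + 1−α)/(r²(θ+1)(θ+2))` and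
`P{X₁=1, X₂=1, X₃=2} = ((θ+α)/r + 1−α)(θ+α)/(r²(θ+1)(θ+2))`; these are equal iff `α = 0`,
so the sequence fails to be exchangeable whenever `α ≠ 0`. -/
theorem pd_urn_not_exchangeable_atomic (α θ : ℝ) (r : ℕ)
    (hα0 : 0 ≤ α) (hα1 : α < 1) (hθ : -α < θ) (hr : 2 ≤ r) :
    pdJoint3 α θ r 1 2 1 =
      (θ + α) * ((θ + 2*α)/r + 1 - α) / (r^2 * (θ + 1) * (θ + 2)) ∧
    pdJoint3 α θ r 1 1 2 =
      ((θ + α)/r + 1 - α) * (θ + α) / (r^2 * (θ + 1) * (θ + 2)) ∧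
    (pdJoint3 α θ r 1 2 1 = pdJoint3 α θ r 1 1 2 ↔ α = 0) :=
  pd_urn_not_exchangeable_atomic_general α θ r hα1 hθ hr
end

section
/- Let ν be a non-atomic probability measure on a complete separable metric space X, and let X_1, X_2, ... be defined by P{X_1 ∈ ·} = ν and P{X_{i+1} ∈ · | X_1,...,X_i} = (q_{0,i} ν(·) + ∑_{j=1}^{n(p_i)} q_{j,i} δ_{X_j*}(·)) / ∑_{j=0}^{n(p_i)} q_{j,i}. Suppose the Exchangeability Condition holds: q_{j,i} = ψ(e_{j,i}) and q_{0,i} = ψ₀(n(p_i)) for fixed non-negative functions ψ, ψ₀, and for every partition p_i of {1,...,i}, ∑_{j=0}^{n(p_i)} q_{j,i} = ξ(i) > 0 for a fixed positive function ξ. Then the sequence X_1, X_2, ... is exchangeable. -/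
open MeasureTheory ProbabilityTheory ENNReal Filter

set_option linter.unusedSectionVars false

/-- One step of the generalized Pólya urn: given the history `xs`, the next value is a
fresh draw from `ν` with weight `ψ₀(n)` (where `n` is the number of distinct values seen)
and equals the `j`-th distinct previous value with weight `ψ(eⱼ)` (where `eⱼ` is the
number of occurrences of that value), all normalized by `ξ(|xs|)`. -/
noncomputable def urnStep {𝓧 : Type*} [MeasurableSpace 𝓧] (ν : Measure 𝓧)
    (ψ ψ0 ξ : ℕ → NNReal) (xs : List 𝓧) : Measure 𝓧 :=
  letI := Classical.decEq 𝓧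
  ((ξ xs.length : ℝ≥0∞))⁻¹ •
    ((ψ0 xs.dedup.length : ℝ≥0∞) • ν +
      (xs.dedup.map (fun x => (ψ (xs.count x) : ℝ≥0∞) • (Measure.dirac x))).sum)

/-- The joint law of `(X₁,…,X_i)` for the generalized Pólya urn sequence defined by
`P{X₁ ∈ ·} = ν` and the prediction rule `urnStep`. -/
noncomputable def urnLaw {𝓧 : Type*} [MeasurableSpace 𝓧] (ν : Measure 𝓧)
    (ψ ψ0 ξ : ℕ → NNReal) : (i : ℕ) → Measure (Fin i → 𝓧)
  | 0 => Measure.dirac (fun k => k.elim0)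
  | (i+1) => (urnLaw ν ψ ψ0 ξ i).bind
      (fun xs => (urnStep ν ψ ψ0 ξ (List.ofFn xs)).map (Fin.snoc xs))

section Urn

variable {𝓧 : Type*} [MetricSpace 𝓧] [TopologicalSpace.SeparableSpace 𝓧]
  [MeasurableSpace 𝓧] [BorelSpace 𝓧] (ν : Measure 𝓧) (ψ ψ0 ξ : ℕ → NNReal)

noncomputable local instance : DecidableEq 𝓧 := Classical.decEq 𝓧

lemma list_sum_apply (L : List (Measure 𝓧)) (s : Set 𝓧) :
    L.sum s = (L.map (fun μ => μ s)).sum := by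
  induction L with
  | nil => simp
  | cons μ L ih => simp [Measure.add_apply, ih]

lemma urnStep_eq (l : List 𝓧) :
    urnStep ν ψ ψ0 ξ l = ((ξ l.length : ℝ≥0∞))⁻¹ •
      ((ψ0 l.toFinset.card : ℝ≥0∞) • ν +
        ∑ x ∈ l.toFinset, (ψ (l.count x) : ℝ≥0∞) • Measure.dirac x) := by
  rw [urnStep, List.card_toFinset]
  have h1 : l.toFinset = l.dedup.toFinset := by
    ext x; simp [List.mem_toFinset, List.mem_dedup]
  rw [h1, List.sum_toFinset _ l.nodup_dedup]

lemma urnStep_apply (l : List 𝓧) {s : Set 𝓧} (hs : MeasurableSet s) :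
    urnStep ν ψ ψ0 ξ l s = ((ξ l.length : ℝ≥0∞))⁻¹ *
      ((ψ0 l.toFinset.card : ℝ≥0∞) * ν s +
        ∑ x ∈ l.toFinset, (ψ (l.count x) : ℝ≥0∞) * s.indicator 1 x) := by
  rw [urnStep_eq, Measure.smul_apply, Measure.add_apply, Measure.smul_apply,
    Measure.finset_sum_apply, smul_eq_mul, smul_eq_mul]
  congr 1
  congr 1
  exact Finset.sum_congr rfl fun x _ => by
    rw [Measure.smul_apply, smul_eq_mul, Measure.dirac_apply' _ hs]

lemma urnStep_perm {l l' : List 𝓧} (h : l.Perm l') :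
    urnStep ν ψ ψ0 ξ l = urnStep ν ψ ψ0 ξ l' := by
  rw [urnStep_eq, urnStep_eq, h.length_eq, List.toFinset_eq_of_perm _ _ h]
  have : ∀ x ∈ l'.toFinset, (ψ (l.count x) : ℝ≥0∞) • Measure.dirac x
      = (ψ (l'.count x) : ℝ≥0∞) • Measure.dirac x := fun x _ => by rw [h.count_eq]
  rw [Finset.sum_congr rfl this]


lemma urnStep_append_notMem {l : List 𝓧} {y : 𝓧} (hy : y ∉ l) {t : Set 𝓧}
    (ht : MeasurableSet t) :
    urnStep ν ψ ψ0 ξ (l ++ [y]) t = ((ξ (l.length + 1) : ℝ≥0∞))⁻¹ *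
      ((ψ0 (l.toFinset.card + 1) : ℝ≥0∞) * ν t +
        ((∑ x ∈ l.toFinset, (ψ (l.count x) : ℝ≥0∞) * t.indicator 1 x) +
          (ψ 1 : ℝ≥0∞) * t.indicator 1 y)) := by
  have hyF : y ∉ l.toFinset := by simpa [List.mem_toFinset] using hy
  have hT : (l ++ [y]).toFinset = insert y l.toFinset := by
    ext x; simp [List.mem_toFinset, or_comm]
  rw [urnStep_apply ν ψ ψ0 ξ _ ht, List.length_append, List.length_singleton, hT,
    Finset.card_insert_of_notMem hyF, Finset.sum_insert hyF]
  have hcy : (l ++ [y]).count y = 1 := by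
    rw [List.count_append, List.count_eq_zero_of_not_mem hy]
    simp
  have hcx : ∀ x ∈ l.toFinset, (l ++ [y]).count x = l.count x := by
    intro x hx
    have hxy : x ≠ y := fun h => hy (h ▸ List.mem_toFinset.1 hx)
    rw [List.count_append, List.count_singleton', if_neg (Ne.symm hxy)]
    simp
  rw [hcy, Finset.sum_congr rfl (fun x hx => by rw [hcx x hx])]
  ring

lemma urnStep_append_mem {l : List 𝓧} {x₀ : 𝓧} (hx₀ : x₀ ∈ l) {t : Set 𝓧}
    (ht : MeasurableSet t) :
    urnStep ν ψ ψ0 ξ (l ++ [x₀]) t = ((ξ (l.length + 1) : ℝ≥0∞))⁻¹ *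
      ((ψ0 l.toFinset.card : ℝ≥0∞) * ν t +
        ∑ x ∈ l.toFinset,
          (ψ (l.count x + if x = x₀ then 1 else 0) : ℝ≥0∞) * t.indicator 1 x) := by
  have hT : (l ++ [x₀]).toFinset = l.toFinset := by
    ext x
    simp only [List.mem_toFinset, List.mem_append, List.mem_singleton]
    exact ⟨fun h => h.elim id (fun h => h ▸ hx₀), Or.inl⟩
  rw [urnStep_apply ν ψ ψ0 ξ _ ht, List.length_append, List.length_singleton, hT]
  congr 2
  refine Finset.sum_congr rfl fun x _ => ?_
  rw [List.count_append, List.count_singleton']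
  by_cases h : x = x₀
  · simp [h]
  · rw [if_neg (fun hh => h hh.symm), Nat.add_zero, if_neg h, Nat.add_zero]


local instance : SecondCountableTopology 𝓧 :=
  UniformSpace.secondCountable_of_separable 𝓧

lemma ofFn_toFinset_sum {M : Type*} [AddCommMonoid M] {n : ℕ} (xs : Fin n → 𝓧) (f : 𝓧 → M) :
    ∑ x ∈ (List.ofFn xs).toFinset, f x
      = ∑ j : Fin n, if ∀ k, xs k = xs j → j ≤ k then f (xs j) else 0 := by
  have himg : (List.ofFn xs).toFinset
      = (Finset.univ.filter (fun j => ∀ k, xs k = xs j → j ≤ k)).image xs := by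
    ext x
    simp only [List.mem_toFinset, List.mem_ofFn, Finset.mem_image, Finset.mem_filter,
      Finset.mem_univ, true_and]
    constructor
    · rintro ⟨j, rfl⟩
      have hne : (Finset.univ.filter (fun k => xs k = xs j)).Nonempty :=
        ⟨j, by simp⟩
      refine ⟨(Finset.univ.filter (fun k => xs k = xs j)).min' hne, ?_, ?_⟩
      · intro k hk
        have hj0 := Finset.min'_mem _ hne
        simp only [Finset.mem_filter, Finset.mem_univ, true_and] at hj0
        exact Finset.min'_le _ _ (by simp [hk.trans hj0])
      · have hj0 := Finset.min'_mem _ hne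
        simp only [Finset.mem_filter, Finset.mem_univ, true_and] at hj0
        exact hj0
    · rintro ⟨j, _, rfl⟩; exact ⟨j, rfl⟩
  have hinj : ∀ a ∈ Finset.univ.filter (fun j => ∀ k, xs k = xs j → j ≤ k),
      ∀ b ∈ Finset.univ.filter (fun j => ∀ k, xs k = xs j → j ≤ k), xs a = xs b → a = b := by
    intro a ha b hb hab
    simp only [Finset.mem_filter, Finset.mem_univ, true_and] at ha hb
    exact le_antisymm (ha b hab.symm) (hb a hab)
  rw [himg, Finset.sum_image hinj, Finset.sum_filter]

lemma ofFn_toFinset_card {n : ℕ} (xs : Fin n → 𝓧) :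
    (List.ofFn xs).toFinset.card
      = ∑ j : Fin n, if ∀ k, xs k = xs j → j ≤ k then 1 else 0 := by
  rw [Finset.card_eq_sum_ones, ofFn_toFinset_sum]

lemma count_ofFn {n : ℕ} (xs : Fin n → 𝓧) (y : 𝓧) :
    (List.ofFn xs).count y = ∑ j : Fin n, if xs j = y then 1 else 0 := by
  induction n with
  | zero => simp
  | succ n ih =>
    rw [List.ofFn_succ, List.count_cons, ih (fun i => xs i.succ), Fin.sum_univ_succ]
    simp only [beq_iff_eq]
    by_cases h : xs 0 = y
    · simp [h, Nat.add_comm]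
    · simp [h]

lemma measurableSet_eqev {n : ℕ} (j k : Fin n) :
    MeasurableSet {xs : Fin n → 𝓧 | xs k = xs j} :=
  MeasureTheory.StronglyMeasurable.measurableSet_eq_fun
    (measurable_pi_apply k).stronglyMeasurable (measurable_pi_apply j).stronglyMeasurable

lemma measurableSet_isFirst {n : ℕ} (j : Fin n) :
    MeasurableSet {xs : Fin n → 𝓧 | ∀ k, xs k = xs j → j ≤ k} := by
  have : {xs : Fin n → 𝓧 | ∀ k, xs k = xs j → j ≤ k}
      = ⋂ k, {xs : Fin n → 𝓧 | xs k = xs j → j ≤ k} := by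
    ext xs; simp [Set.mem_iInter]
  rw [this]
  refine MeasurableSet.iInter fun k => ?_
  by_cases h : j ≤ k
  · have : {xs : Fin n → 𝓧 | xs k = xs j → j ≤ k} = Set.univ := by
      ext xs; simp [h]
    rw [this]; exact MeasurableSet.univ
  · have : {xs : Fin n → 𝓧 | xs k = xs j → j ≤ k} = {xs : Fin n → 𝓧 | xs k = xs j}ᶜ := by
      ext xs; simp [h]
    rw [this]; exact (measurableSet_eqev j k).compl

lemma measurable_count {n : ℕ} (j : Fin n) :
    Measurable fun xs : Fin n → 𝓧 => (List.ofFn xs).count (xs j) := by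
  have : (fun xs : Fin n → 𝓧 => (List.ofFn xs).count (xs j))
      = fun xs => ∑ k : Fin n, if xs k = xs j then 1 else 0 := by
    funext xs; exact count_ofFn xs (xs j)
  rw [this]
  exact Finset.measurable_sum _ fun k _ =>
    measurable_const.ite (measurableSet_eqev j k) measurable_const

lemma measurable_nat_comp {α : Type*} [MeasurableSpace α] {g : α → ℕ} (hg : Measurable g)
    (f : ℕ → ℝ≥0∞) : Measurable fun a => f (g a) :=
  measurable_from_nat.comp hg

lemma measurable_urnStep (n : ℕ) :
    Measurable fun xs : Fin n → 𝓧 => urnStep ν ψ ψ0 ξ (List.ofFn xs) := by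
  refine Measure.measurable_of_measurable_coe _ fun s hs => ?_
  have hrw : ∀ xs : Fin n → 𝓧, urnStep ν ψ ψ0 ξ (List.ofFn xs) s
      = ((ξ n : ℝ≥0∞))⁻¹ *
        ((ψ0 (∑ j : Fin n, if ∀ k, xs k = xs j → j ≤ k then 1 else 0) : ℝ≥0∞) * ν s +
          ∑ j : Fin n, if ∀ k, xs k = xs j → j ≤ k
            then (ψ ((List.ofFn xs).count (xs j)) : ℝ≥0∞) * s.indicator 1 (xs j) else 0) := by
    intro xs
    rw [urnStep_apply ν ψ ψ0 ξ _ hs, List.length_ofFn, ofFn_toFinset_card,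
      ofFn_toFinset_sum xs (fun x => (ψ ((List.ofFn xs).count x) : ℝ≥0∞) * s.indicator 1 x)]
  simp only [hrw]
  refine Measurable.const_mul (Measurable.add ?_ ?_) _
  · refine Measurable.mul_const ?_ _
    refine measurable_nat_comp ?_ (fun m => (ψ0 m : ℝ≥0∞))
    exact Finset.measurable_sum _ fun j _ =>
      measurable_const.ite (measurableSet_isFirst j) measurable_const
  · refine Finset.measurable_sum _ fun j _ => ?_
    refine Measurable.ite (measurableSet_isFirst j) ?_ measurable_const
    refine Measurable.mul ?_ ?_
    · exact measurable_nat_comp (measurable_count j) (fun m => (ψ m : ℝ≥0∞))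
    · exact (measurable_const.indicator hs).comp (measurable_pi_apply j)


noncomputable def urnBound (ψ ψ0 ξ : ℕ → NNReal) (n : ℕ) : ℝ≥0∞ :=
  ((ξ n : ℝ≥0∞))⁻¹ * (((((Finset.range (n + 1)).sup ψ0) : NNReal) : ℝ≥0∞)
    + n * ((((Finset.range (n + 1)).sup ψ) : NNReal) : ℝ≥0∞))

lemma urnStep_univ_le [IsProbabilityMeasure ν] (l : List 𝓧) :
    urnStep ν ψ ψ0 ξ l Set.univ ≤ urnBound ψ ψ0 ξ l.length := by
  rw [urnStep_apply ν ψ ψ0 ξ l MeasurableSet.univ, urnBound]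
  refine mul_le_mul_right (add_le_add ?_ ?_) _
  · rw [measure_univ, mul_one]
    exact ENNReal.coe_le_coe.2 (Finset.le_sup (Finset.mem_range.2
      (Nat.lt_succ_of_le l.toFinset_card_le)))
  · calc ∑ x ∈ l.toFinset, (ψ (l.count x) : ℝ≥0∞) * Set.indicator Set.univ 1 x
        ≤ ∑ _x ∈ l.toFinset, ((((Finset.range (l.length + 1)).sup ψ) : NNReal) : ℝ≥0∞) := by
          refine Finset.sum_le_sum fun x _ => ?_
          rw [Set.indicator_univ, Pi.one_apply, mul_one]
          exact ENNReal.coe_le_coe.2 (Finset.le_sup (Finset.mem_range.2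
            (Nat.lt_succ_of_le (List.count_le_length : l.count x ≤ l.length))))
      _ = l.toFinset.card * ((((Finset.range (l.length + 1)).sup ψ) : NNReal) : ℝ≥0∞) := by
          rw [Finset.sum_const, nsmul_eq_mul]
      _ ≤ l.length * ((((Finset.range (l.length + 1)).sup ψ) : NNReal) : ℝ≥0∞) :=
          mul_le_mul_left (Nat.cast_le.2 l.toFinset_card_le) _

lemma urnBound_lt_top (hξ : ∀ i, 0 < ξ i) (n : ℕ) : urnBound ψ ψ0 ξ n < ⊤ := by
  rw [urnBound]
  refine ENNReal.mul_lt_top (ENNReal.inv_lt_top.2 (by exact_mod_cast (hξ n))) ?_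
  refine ENNReal.add_lt_top.2 ⟨ENNReal.coe_lt_top, ?_⟩
  exact ENNReal.mul_lt_top (ENNReal.natCast_ne_top n).lt_top ENNReal.coe_lt_top

lemma isFiniteMeasure_urnStep [IsProbabilityMeasure ν] (hξ : ∀ i, 0 < ξ i) (l : List 𝓧) :
    IsFiniteMeasure (urnStep ν ψ ψ0 ξ l) :=
  ⟨lt_of_le_of_lt (urnStep_univ_le ν ψ ψ0 ξ l) (urnBound_lt_top ψ ψ0 ξ hξ l.length)⟩

lemma measurable_snoc_pair (n : ℕ) :
    Measurable fun p : (Fin n → 𝓧) × 𝓧 => (Fin.snoc p.1 p.2 : Fin (n+1) → 𝓧) := by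
  refine measurable_pi_lambda _ fun j => ?_
  refine Fin.lastCases ?_ ?_ j
  · simpa [Fin.snoc_last] using measurable_snd
  · intro j'
    simpa [Fin.snoc_castSucc, Function.comp_def] using (measurable_pi_apply j').comp
      (measurable_fst : Measurable fun p : (Fin n → 𝓧) × 𝓧 => p.1)

lemma measurable_snoc_right {n : ℕ} (xs : Fin n → 𝓧) :
    Measurable fun y : 𝓧 => (Fin.snoc xs y : Fin (n+1) → 𝓧) :=
  (measurable_snoc_pair n).comp (measurable_const.prodMk measurable_id)

/-- The urn prediction rule as a kernel on histories of length `n`. -/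
noncomputable def urnKernel (n : ℕ) : Kernel (Fin n → 𝓧) 𝓧 :=
  ⟨fun xs => urnStep ν ψ ψ0 ξ (List.ofFn xs), measurable_urnStep ν ψ ψ0 ξ n⟩

lemma urnKernel_apply (n : ℕ) (xs : Fin n → 𝓧) :
    urnKernel ν ψ ψ0 ξ n xs = urnStep ν ψ ψ0 ξ (List.ofFn xs) := rfl

lemma isFiniteKernel_urnKernel [IsProbabilityMeasure ν] (hξ : ∀ i, 0 < ξ i) (n : ℕ) :
    IsFiniteKernel (urnKernel ν ψ ψ0 ξ n) := by
  refine ⟨⟨urnBound ψ ψ0 ξ n, urnBound_lt_top ψ ψ0 ξ hξ n, ?_⟩⟩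
  intro xs
  rw [urnKernel_apply]
  simpa [List.length_ofFn] using urnStep_univ_le ν ψ ψ0 ξ (List.ofFn xs)

/-- One step of the urn law: append a draw to the history. -/
noncomputable def urnK (n : ℕ) : (Fin n → 𝓧) → Measure (Fin (n+1) → 𝓧) :=
  fun xs => (urnStep ν ψ ψ0 ξ (List.ofFn xs)).map (Fin.snoc xs)

lemma urnLaw_succ (i : ℕ) :
    urnLaw ν ψ ψ0 ξ (i+1) = (urnLaw ν ψ ψ0 ξ i).bind (urnK ν ψ ψ0 ξ i) := rfl

lemma measurable_urnK [IsProbabilityMeasure ν] (hξ : ∀ i, 0 < ξ i) (n : ℕ) :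
    Measurable (urnK ν ψ ψ0 ξ n) := by
  haveI := isFiniteKernel_urnKernel ν ψ ψ0 ξ hξ n
  refine Measure.measurable_of_measurable_coe _ fun s hs => ?_
  have h1 : ∀ xs : Fin n → 𝓧, urnK ν ψ ψ0 ξ n xs s
      = urnKernel ν ψ ψ0 ξ n xs (Prod.mk xs ⁻¹'
          ((fun p : (Fin n → 𝓧) × 𝓧 => (Fin.snoc p.1 p.2 : Fin (n+1) → 𝓧)) ⁻¹' s)) := by
    intro xs
    rw [urnK, Measure.map_apply (measurable_snoc_right xs) hs]
    rfl
  simp_rw [h1]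
  exact Kernel.measurable_kernel_prodMk_left ((measurable_snoc_pair n) hs)

lemma Measure.map_bind' {α β γ : Type*} [MeasurableSpace α] [MeasurableSpace β]
    [MeasurableSpace γ] {μ : Measure α} {f : α → Measure β} {g : β → γ}
    (hf : Measurable f) (hg : Measurable g) :
    (μ.bind f).map g = μ.bind (fun a => (f a).map g) := by
  ext s hs
  rw [Measure.map_apply hg hs, Measure.bind_apply (hg hs) hf.aemeasurable,
    Measure.bind_apply (f := fun a => (f a).map g) hs
      ((Measure.measurable_map g hg).comp hf).aemeasurable]
  exact lintegral_congr fun a => (Measure.map_apply hg hs).symm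

lemma Measure.bind_map' {α β γ : Type*} [MeasurableSpace α] [MeasurableSpace β]
    [MeasurableSpace γ] {μ : Measure α} {g : α → β} {f : β → Measure γ}
    (hg : Measurable g) (hf : Measurable f) :
    (μ.map g).bind f = μ.bind (fun a => f (g a)) := by
  ext s hs
  rw [Measure.bind_apply hs hf.aemeasurable,
    MeasureTheory.lintegral_map (f := fun b => f b s) ((Measure.measurable_coe hs).comp hf) hg,
    Measure.bind_apply (f := fun a => f (g a)) hs (hf.comp hg).aemeasurable]


lemma ofFn_snoc {n : ℕ} (xs : Fin n → 𝓧) (y : 𝓧) :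
    List.ofFn (Fin.snoc xs y : Fin (n+1) → 𝓧) = List.ofFn xs ++ [y] := by
  rw [List.ofFn_succ']
  simp [Fin.snoc_castSucc, Fin.snoc_last, List.concat_eq_append]

/-- The second-draw kernel, given history `xs`. -/
noncomputable def urnKappa (n : ℕ) (xs : Fin n → 𝓧) : Kernel 𝓧 𝓧 :=
  ⟨fun y => urnStep ν ψ ψ0 ξ (List.ofFn (Fin.snoc xs y : Fin (n+1) → 𝓧)),
    (measurable_urnStep ν ψ ψ0 ξ (n+1)).comp (measurable_snoc_right xs)⟩

lemma urnKappa_apply {n : ℕ} (xs : Fin n → 𝓧) (y : 𝓧) :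
    urnKappa ν ψ ψ0 ξ n xs y = urnStep ν ψ ψ0 ξ (List.ofFn xs ++ [y]) := by
  show urnStep ν ψ ψ0 ξ (List.ofFn (Fin.snoc xs y : Fin (n+1) → 𝓧)) = _
  rw [ofFn_snoc]

lemma isFiniteKernel_urnKappa [IsProbabilityMeasure ν] (hξ : ∀ i, 0 < ξ i) {n : ℕ}
    (xs : Fin n → 𝓧) : IsFiniteKernel (urnKappa ν ψ ψ0 ξ n xs) := by
  refine ⟨⟨urnBound ψ ψ0 ξ (n+1), urnBound_lt_top ψ ψ0 ξ hξ (n+1), fun y => ?_⟩⟩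
  rw [urnKappa_apply]
  simpa [List.length_append, List.length_ofFn] using
    urnStep_univ_le ν ψ ψ0 ξ (List.ofFn xs ++ [y])

lemma indicator_lintegral (C D : ℝ≥0∞) {s t : Set 𝓧} (hs : MeasurableSet s)
    (ht : MeasurableSet t) :
    ∫⁻ y, s.indicator (fun y => C + D * t.indicator 1 y) y ∂ν
      = C * ν s + D * ν (s ∩ t) := by
  have h1 : (fun y => s.indicator (fun y => C + D * t.indicator 1 y) y)
      = fun y => s.indicator (fun _ => C) y + (s ∩ t).indicator (fun _ => D) y := by
    funext y
    by_cases hy : y ∈ s <;> by_cases hy' : y ∈ t <;>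
      simp [Set.indicator_apply, hy, hy', Set.mem_inter_iff]
  rw [h1, lintegral_add_left (measurable_const.indicator hs),
    lintegral_indicator_const hs, lintegral_indicator_const (hs.inter ht)]

lemma ds_symm (F : Finset 𝓧) (e : 𝓧 → ℕ) (s t : Set 𝓧) :
    ∑ x ∈ F, ∑ x' ∈ F, (ψ (e x) : ℝ≥0∞) * (ψ (e x' + if x' = x then 1 else 0) : ℝ≥0∞)
        * s.indicator 1 x * t.indicator 1 x'
      = ∑ x ∈ F, ∑ x' ∈ F, (ψ (e x) : ℝ≥0∞) * (ψ (e x' + if x' = x then 1 else 0) : ℝ≥0∞)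
        * t.indicator 1 x * s.indicator 1 x' := by
  rw [Finset.sum_comm]
  refine Finset.sum_congr rfl fun x _ => Finset.sum_congr rfl fun x' _ => ?_
  by_cases h : x = x'
  · subst h; ring
  · rw [if_neg h, if_neg (fun hh => h hh.symm), Nat.add_zero, Nat.add_zero]
    ring


lemma urn_pair_rect [IsProbabilityMeasure ν] (hna : ∀ x : 𝓧, ν {x} = 0)
    (hξ : ∀ i, 0 < ξ i) {n : ℕ} (xs : Fin n → 𝓧) {s t : Set 𝓧}
    (hs : MeasurableSet s) (ht : MeasurableSet t) :
    (urnStep ν ψ ψ0 ξ (List.ofFn xs) ⊗ₘ urnKappa ν ψ ψ0 ξ n xs) (s ×ˢ t)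
      = ((ξ n : ℝ≥0∞))⁻¹ * ((ξ (n+1) : ℝ≥0∞))⁻¹ *
        ((ψ0 (List.ofFn xs).toFinset.card : ℝ≥0∞)
            * (ψ0 ((List.ofFn xs).toFinset.card + 1) : ℝ≥0∞) * ν s * ν t
          + (ψ0 (List.ofFn xs).toFinset.card : ℝ≥0∞) * (ψ 1 : ℝ≥0∞) * ν (s ∩ t)
          + (ψ0 (List.ofFn xs).toFinset.card : ℝ≥0∞) * ν s *
              (∑ x ∈ (List.ofFn xs).toFinset,
                (ψ ((List.ofFn xs).count x) : ℝ≥0∞) * t.indicator 1 x)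
          + (ψ0 (List.ofFn xs).toFinset.card : ℝ≥0∞) * ν t *
              (∑ x ∈ (List.ofFn xs).toFinset,
                (ψ ((List.ofFn xs).count x) : ℝ≥0∞) * s.indicator 1 x)
          + ∑ x ∈ (List.ofFn xs).toFinset, ∑ x' ∈ (List.ofFn xs).toFinset,
              (ψ ((List.ofFn xs).count x) : ℝ≥0∞)
                * (ψ ((List.ofFn xs).count x' + if x' = x then 1 else 0) : ℝ≥0∞)
                * s.indicator 1 x * t.indicator 1 x') := by
  haveI : MeasureTheory.NullSingletonClass ν := ⟨hna⟩
  haveI := isFiniteMeasure_urnStep ν ψ ψ0 ξ hξ (List.ofFn xs)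
  haveI := isFiniteKernel_urnKappa ν ψ ψ0 ξ hξ xs
  set l := List.ofFn xs with hl
  set F := l.toFinset with hF
  set c' := ((ξ (n+1) : ℝ≥0∞))⁻¹ with hc'
  set Wt := ∑ x ∈ F, (ψ (l.count x) : ℝ≥0∞) * t.indicator 1 x with hWt
  set Ws := ∑ x ∈ F, (ψ (l.count x) : ℝ≥0∞) * s.indicator 1 x with hWs
  have hlen : l.length = n := by rw [hl, List.length_ofFn]
  have hκ : ∀ y, urnKappa ν ψ ψ0 ξ n xs y t = urnStep ν ψ ψ0 ξ (l ++ [y]) t :=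
    fun y => by rw [urnKappa_apply]
  have hgmeas : Measurable (fun y => s.indicator
      (fun y => urnKappa ν ψ ψ0 ξ n xs y t) y) :=
    (Kernel.measurable_coe _ ht).indicator hs
  rw [Measure.compProd_apply_prod hs ht, ← lintegral_indicator hs,
    urnStep_eq ν ψ ψ0 ξ l, hlen, lintegral_smul_measure, lintegral_add_measure,
    lintegral_smul_measure, lintegral_finset_sum_measure]
  simp_rw [lintegral_smul_measure, lintegral_dirac' _ hgmeas]
  have hν : ∫⁻ y, s.indicator (fun y => urnKappa ν ψ ψ0 ξ n xs y t) y ∂ν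
      = (c' * ((ψ0 (F.card + 1) : ℝ≥0∞) * ν t + Wt)) * ν s
        + (c' * (ψ 1 : ℝ≥0∞)) * ν (s ∩ t) := by
    have hnull : ν {y : 𝓧 | y ∈ l} = 0 := Set.Finite.measure_zero l.finite_toSet ν
    have hae : ∀ᵐ y ∂ν, y ∉ l := by
      rw [MeasureTheory.ae_iff]
      simpa using hnull
    have heq : ∀ᵐ y ∂ν, s.indicator (fun y => urnKappa ν ψ ψ0 ξ n xs y t) y
        = s.indicator (fun y => (c' * ((ψ0 (F.card + 1) : ℝ≥0∞) * ν t + Wt))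
            + (c' * (ψ 1 : ℝ≥0∞)) * t.indicator 1 y) y := by
      refine hae.mono fun y hy => ?_
      by_cases hys : y ∈ s
      · rw [Set.indicator_of_mem hys, Set.indicator_of_mem hys, hκ y,
          urnStep_append_notMem ν ψ ψ0 ξ hy ht, hlen]
        ring
      · rw [Set.indicator_of_notMem hys, Set.indicator_of_notMem hys]
    rw [lintegral_congr_ae heq, indicator_lintegral ν _ _ hs ht]
  have hx : ∀ x ∈ F, s.indicator (fun y => urnKappa ν ψ ψ0 ξ n xs y t) x
      = s.indicator 1 x * (c' * ((ψ0 F.card : ℝ≥0∞) * ν t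
          + ∑ x' ∈ F, (ψ (l.count x' + if x' = x then 1 else 0) : ℝ≥0∞)
              * t.indicator 1 x')) := by
    intro x hxF
    have hxl : x ∈ l := List.mem_toFinset.1 (hF ▸ hxF)
    by_cases hxs : x ∈ s
    · rw [Set.indicator_of_mem hxs, Set.indicator_of_mem hxs, Pi.one_apply, one_mul,
        hκ x, urnStep_append_mem ν ψ ψ0 ξ hxl ht, hlen]
    · rw [Set.indicator_of_notMem hxs, Set.indicator_of_notMem hxs, zero_mul]
  have hsum : ∑ x ∈ F, (ψ (l.count x) : ℝ≥0∞) *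
        s.indicator (fun y => urnKappa ν ψ ψ0 ξ n xs y t) x
      = c' * ((ψ0 F.card : ℝ≥0∞) * ν t * Ws)
        + c' * ∑ x ∈ F, ∑ x' ∈ F, (ψ (l.count x) : ℝ≥0∞)
            * (ψ (l.count x' + if x' = x then 1 else 0) : ℝ≥0∞)
            * s.indicator 1 x * t.indicator 1 x' := by
    have h1 : ∀ x ∈ F, (ψ (l.count x) : ℝ≥0∞) *
          s.indicator (fun y => urnKappa ν ψ ψ0 ξ n xs y t) x
        = c' * ((ψ0 F.card : ℝ≥0∞) * ν t * ((ψ (l.count x) : ℝ≥0∞) * s.indicator 1 x))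
          + c' * ∑ x' ∈ F, (ψ (l.count x) : ℝ≥0∞)
              * (ψ (l.count x' + if x' = x then 1 else 0) : ℝ≥0∞)
              * s.indicator 1 x * t.indicator 1 x' := by
      intro x hxF
      rw [hx x hxF]
      have h2 : ∑ x' ∈ F, (ψ (l.count x) : ℝ≥0∞)
            * (ψ (l.count x' + if x' = x then 1 else 0) : ℝ≥0∞)
            * s.indicator 1 x * t.indicator 1 x'
          = ((ψ (l.count x) : ℝ≥0∞) * s.indicator 1 x) *
            ∑ x' ∈ F, (ψ (l.count x' + if x' = x then 1 else 0) : ℝ≥0∞)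
              * t.indicator 1 x' := by
        rw [Finset.mul_sum]
        exact Finset.sum_congr rfl fun x' _ => by ring
      rw [h2]
      ring
    rw [Finset.sum_congr rfl h1, Finset.sum_add_distrib, ← Finset.mul_sum,
      ← Finset.mul_sum, ← Finset.mul_sum, ← hWs]
  simp only [smul_eq_mul]
  rw [hν, hsum]
  ring


lemma urn_pair_swap [IsProbabilityMeasure ν] (hna : ∀ x : 𝓧, ν {x} = 0)
    (hξ : ∀ i, 0 < ξ i) {n : ℕ} (xs : Fin n → 𝓧) :
    (urnStep ν ψ ψ0 ξ (List.ofFn xs) ⊗ₘ urnKappa ν ψ ψ0 ξ n xs).map Prod.swap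
      = urnStep ν ψ ψ0 ξ (List.ofFn xs) ⊗ₘ urnKappa ν ψ ψ0 ξ n xs := by
  haveI := isFiniteMeasure_urnStep ν ψ ψ0 ξ hξ (List.ofFn xs)
  haveI := isFiniteKernel_urnKappa ν ψ ψ0 ξ hξ xs
  haveI : IsFiniteMeasure
      ((urnStep ν ψ ψ0 ξ (List.ofFn xs) ⊗ₘ urnKappa ν ψ ψ0 ξ n xs).map Prod.swap) := by
    refine ⟨?_⟩
    rw [Measure.map_apply measurable_swap MeasurableSet.univ, Set.preimage_univ]
    exact measure_lt_top _ _
  refine MeasureTheory.ext_of_generate_finite _ generateFrom_prod.symm isPiSystem_prod ?_ ?_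
  · rintro _ ⟨u, hu, v, hv, rfl⟩
    simp only [Set.mem_setOf_eq] at hu hv
    rw [Measure.map_apply measurable_swap ((hu.prod hv)), Set.preimage_swap_prod,
      urn_pair_rect ν ψ ψ0 ξ hna hξ xs hv hu, urn_pair_rect ν ψ ψ0 ξ hna hξ xs hu hv,
      Set.inter_comm v u, ds_symm ψ (List.ofFn xs).toFinset (List.count · (List.ofFn xs)) u v]
    ring
  · rw [Measure.map_apply measurable_swap MeasurableSet.univ, Set.preimage_univ]

lemma perm_ofFn_comp {n : ℕ} (xs : Fin n → 𝓧) (σ : Equiv.Perm (Fin n)) :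
    (List.ofFn (xs ∘ σ)).Perm (List.ofFn xs) := by
  rw [List.ofFn_eq_map, List.ofFn_eq_map]
  have h1 : (List.finRange n).map (xs ∘ σ) = ((List.finRange n).map σ).map xs := by
    rw [List.map_map]
  rw [h1]
  refine List.Perm.map xs ?_
  refine List.perm_of_nodup_nodup_toFinset_eq
    ((List.nodup_finRange n).map σ.injective) (List.nodup_finRange n) ?_
  ext j
  simp only [List.mem_toFinset, List.mem_map, List.mem_finRange, true_and]
  exact ⟨fun _ => trivial, fun _ => ⟨σ.symm j, σ.apply_symm_apply j⟩⟩

lemma measurable_comp_perm {n : ℕ} (σ : Equiv.Perm (Fin n)) :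
    Measurable fun v : Fin n → 𝓧 => v ∘ σ :=
  measurable_pi_lambda _ fun j => measurable_pi_apply (σ j)

lemma snoc_comp_swap_lt {n : ℕ} (k : Fin n) (h : (k : ℕ) + 1 < n) (xs : Fin n → 𝓧) (y : 𝓧) :
    (Fin.snoc xs y : Fin (n+1) → 𝓧) ∘ (Equiv.swap (Fin.castSucc k) (Fin.succ k))
      = Fin.snoc (xs ∘ (Equiv.swap k ⟨(k : ℕ) + 1, h⟩)) y := by
  funext j
  refine Fin.lastCases ?_ ?_ j
  · have h1 : Fin.last n ≠ Fin.castSucc k := (Fin.castSucc_lt_last k).ne'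
    have h2 : Fin.last n ≠ Fin.succ k := by
      intro hh
      have := congrArg Fin.val hh
      simp only [Fin.val_last, Fin.val_succ] at this
      omega
    show (Fin.snoc xs y : Fin (n+1) → 𝓧) (Equiv.swap _ _ (Fin.last n)) = _
    rw [Equiv.swap_apply_of_ne_of_ne h1 h2, Fin.snoc_last, Fin.snoc_last]
  · intro j'
    show (Fin.snoc xs y : Fin (n+1) → 𝓧) (Equiv.swap _ _ (Fin.castSucc j')) = _
    have hsucc : Fin.succ k = Fin.castSucc (⟨(k : ℕ) + 1, h⟩ : Fin n) := by
      apply Fin.ext; simp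
    by_cases h1 : j' = k
    · subst h1
      rw [Equiv.swap_apply_left, hsucc, Fin.snoc_castSucc, Fin.snoc_castSucc,
        Function.comp_apply, Equiv.swap_apply_left]
    · by_cases h2 : j' = (⟨(k : ℕ) + 1, h⟩ : Fin n)
      · subst h2
        rw [show Equiv.swap (Fin.castSucc k) (Fin.succ k)
              (Fin.castSucc (⟨(k : ℕ) + 1, h⟩ : Fin n)) = Fin.castSucc k from by
            rw [← hsucc, Equiv.swap_apply_right],
          Fin.snoc_castSucc, Fin.snoc_castSucc, Function.comp_apply,
          Equiv.swap_apply_right]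
      · rw [Equiv.swap_apply_of_ne_of_ne (fun hh => h1 (Fin.castSucc_injective n hh))
          (fun hh => h2 (by rw [hsucc] at hh; exact Fin.castSucc_injective n hh)),
          Fin.snoc_castSucc, Fin.snoc_castSucc, Function.comp_apply,
          Equiv.swap_apply_of_ne_of_ne h1 h2]

lemma snoc_snoc_comp_swap {m : ℕ} (xs : Fin m → 𝓧) (y z : 𝓧) :
    (Fin.snoc (Fin.snoc xs y) z : Fin (m+2) → 𝓧) ∘
        (Equiv.swap (Fin.castSucc (Fin.last m)) (Fin.succ (Fin.last m)))
      = (Fin.snoc (Fin.snoc xs z) y : Fin (m+2) → 𝓧) := by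
  funext j
  refine Fin.lastCases ?_ ?_ j
  · show (Fin.snoc (Fin.snoc xs y) z : Fin (m+2) → 𝓧)
        (Equiv.swap _ _ (Fin.last (m+1))) = _
    rw [← Fin.succ_last, Equiv.swap_apply_right, Fin.snoc_castSucc, Fin.snoc_last,
      Fin.succ_last, Fin.snoc_last]
  · intro j'
    show (Fin.snoc (Fin.snoc xs y) z : Fin (m+2) → 𝓧)
        (Equiv.swap _ _ (Fin.castSucc j')) = _
    refine Fin.lastCases ?_ ?_ j'
    · rw [Equiv.swap_apply_left, Fin.succ_last, Fin.snoc_last, Fin.snoc_castSucc,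
        Fin.snoc_last]
    · intro j''
      have h1 : Fin.castSucc (Fin.castSucc j'') ≠ Fin.castSucc (Fin.last m) :=
        fun hh => (Fin.castSucc_lt_last j'').ne (Fin.castSucc_injective _ hh)
      have h2 : Fin.castSucc (Fin.castSucc j'') ≠ Fin.succ (Fin.last m) := by
        rw [Fin.succ_last]
        exact (Fin.castSucc_lt_last _).ne
      rw [Equiv.swap_apply_of_ne_of_ne h1 h2, Fin.snoc_castSucc, Fin.snoc_castSucc,
        Fin.snoc_castSucc, Fin.snoc_castSucc]

lemma two_step_eq [IsProbabilityMeasure ν] (hξ : ∀ i, 0 < ξ i) {m : ℕ} (xs : Fin m → 𝓧) :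
    (urnK ν ψ ψ0 ξ m xs).bind (urnK ν ψ ψ0 ξ (m+1))
      = (urnStep ν ψ ψ0 ξ (List.ofFn xs) ⊗ₘ urnKappa ν ψ ψ0 ξ m xs).map
          (fun p : 𝓧 × 𝓧 => (Fin.snoc (Fin.snoc xs p.1) p.2 : Fin (m+2) → 𝓧)) := by
  haveI := isFiniteMeasure_urnStep ν ψ ψ0 ξ hξ (List.ofFn xs)
  haveI := isFiniteKernel_urnKappa ν ψ ψ0 ξ hξ xs
  have hG : Measurable fun p : 𝓧 × 𝓧 => (Fin.snoc (Fin.snoc xs p.1) p.2 : Fin (m+2) → 𝓧) :=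
    (measurable_snoc_pair (m+1)).comp
      (((measurable_snoc_right xs).comp measurable_fst).prodMk measurable_snd)
  have hKm : urnK ν ψ ψ0 ξ m xs = (urnStep ν ψ ψ0 ξ (List.ofFn xs)).map
      (fun y => (Fin.snoc xs y : Fin (m+1) → 𝓧)) := rfl
  ext u hu
  rw [Measure.bind_apply hu (measurable_urnK ν ψ ψ0 ξ hξ (m+1)).aemeasurable, hKm,
    MeasureTheory.lintegral_map (f := fun w => urnK ν ψ ψ0 ξ (m+1) w u)
      ((Measure.measurable_coe hu).comp (measurable_urnK ν ψ ψ0 ξ hξ (m+1)))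
      (measurable_snoc_right xs),
    Measure.map_apply hG hu, Measure.compProd_apply (hG hu)]
  refine lintegral_congr fun y => ?_
  show (urnStep ν ψ ψ0 ξ (List.ofFn (Fin.snoc xs y : Fin (m+1) → 𝓧))).map
      (Fin.snoc (Fin.snoc xs y)) u = _
  rw [Measure.map_apply (measurable_snoc_right _) hu]
  rfl

end Urn

/-- **Theorem 1.** Let `ν` be a non-atomic probability measure on a complete separable
metric space and suppose the Exchangeability Condition holds: the continuation weights
are `ψ(eⱼ)`, the fresh-draw weight is `ψ₀(n)`, and for every partition (i.e. every
multiset of positive block sizes) the total weight is `ξ(i) > 0`.  Then the generalized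
Pólya urn sequence is exchangeable: for every `i` the joint law of `(X₁,…,X_i)` is
invariant under every permutation of the indices. -/
theorem urn_exchangeable {𝓧 : Type*} [MetricSpace 𝓧] [CompleteSpace 𝓧]
    [TopologicalSpace.SeparableSpace 𝓧] [MeasurableSpace 𝓧] [BorelSpace 𝓧]
    (ν : Measure 𝓧) [IsProbabilityMeasure ν] (hna : ∀ x : 𝓧, ν {x} = 0)
    (ψ ψ0 ξ : ℕ → NNReal)
    (hEC : ∀ s : Multiset ℕ, (∀ e ∈ s, 0 < e) →
      ψ0 (Multiset.card s) + (s.map ψ).sum = ξ s.sum)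
    (hξ : ∀ i, 0 < ξ i) :
    ∀ (i : ℕ) (σ : Equiv.Perm (Fin i)),
      (urnLaw ν ψ ψ0 ξ i).map (fun v => v ∘ σ) = urnLaw ν ψ ψ0 ξ i := by
  intro i
  induction i with
  | zero =>
    intro σ
    have h0 : (fun v : Fin 0 → 𝓧 => v ∘ σ) = id := by
      funext v; funext k; exact k.elim0
    rw [h0, Measure.map_id]
  | succ i IH =>
    have hgen : ∀ k : Fin i,
        (urnLaw ν ψ ψ0 ξ (i+1)).map
            (fun v => v ∘ (Equiv.swap (Fin.castSucc k) (Fin.succ k)))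
          = urnLaw ν ψ ψ0 ξ (i+1) := by
      intro k
      rcases Nat.lt_or_ge ((k : ℕ) + 1) i with hA | hB
      · -- adjacent transposition strictly inside the first `i` coordinates
        have hpt : ∀ xs : Fin i → 𝓧,
            (urnK ν ψ ψ0 ξ i xs).map
                (fun v => v ∘ (Equiv.swap (Fin.castSucc k) (Fin.succ k)))
              = urnK ν ψ ψ0 ξ i (xs ∘ (Equiv.swap k ⟨(k : ℕ) + 1, hA⟩)) := by
          intro xs
          have hmm : urnK ν ψ ψ0 ξ i xs = (urnStep ν ψ ψ0 ξ (List.ofFn xs)).map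
              (fun y => (Fin.snoc xs y : Fin (i+1) → 𝓧)) := rfl
          rw [hmm, Measure.map_map (measurable_comp_perm _) (measurable_snoc_right xs)]
          have hcomp : (fun v : Fin (i+1) → 𝓧 =>
                v ∘ (Equiv.swap (Fin.castSucc k) (Fin.succ k)))
                ∘ (fun y => (Fin.snoc xs y : Fin (i+1) → 𝓧))
              = fun y => (Fin.snoc (xs ∘ (Equiv.swap k ⟨(k : ℕ) + 1, hA⟩)) y :
                  Fin (i+1) → 𝓧) :=
            funext fun y => snoc_comp_swap_lt k hA xs y
          rw [hcomp,
            urnStep_perm ν ψ ψ0 ξ (perm_ofFn_comp xs (Equiv.swap k ⟨(k : ℕ) + 1, hA⟩)).symm]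
          rfl
        rw [urnLaw_succ, Measure.map_bind' (measurable_urnK ν ψ ψ0 ξ hξ i)
            (measurable_comp_perm _),
          show (fun xs => (urnK ν ψ ψ0 ξ i xs).map
              (fun v => v ∘ (Equiv.swap (Fin.castSucc k) (Fin.succ k))))
            = fun xs => urnK ν ψ ψ0 ξ i (xs ∘ (Equiv.swap k ⟨(k : ℕ) + 1, hA⟩)) from
            funext hpt,
          ← Measure.bind_map' (measurable_comp_perm _) (measurable_urnK ν ψ ψ0 ξ hξ i),
          IH _, ← urnLaw_succ]
      · -- transposition of the last two coordinates
        obtain ⟨m, rfl⟩ : ∃ m, i = m + 1 := ⟨i - 1, by omega⟩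
        have hk : k = Fin.last m := by
          apply Fin.ext
          have := k.isLt
          simp only [Fin.val_last]
          omega
        subst hk
        have hbb : Measurable fun xs : Fin m → 𝓧 =>
            (urnK ν ψ ψ0 ξ m xs).bind (urnK ν ψ ψ0 ξ (m+1)) :=
          (Measure.measurable_bind' (measurable_urnK ν ψ ψ0 ξ hξ (m+1))).comp
            (measurable_urnK ν ψ ψ0 ξ hξ m)
        have hpt : ∀ xs : Fin m → 𝓧,
            ((urnK ν ψ ψ0 ξ m xs).bind (urnK ν ψ ψ0 ξ (m+1))).map
                (fun v => v ∘ (Equiv.swap (Fin.castSucc (Fin.last m))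
                  (Fin.succ (Fin.last m))))
              = (urnK ν ψ ψ0 ξ m xs).bind (urnK ν ψ ψ0 ξ (m+1)) := by
          intro xs
          haveI := isFiniteMeasure_urnStep ν ψ ψ0 ξ hξ (List.ofFn xs)
          haveI := isFiniteKernel_urnKappa ν ψ ψ0 ξ hξ xs
          have hG : Measurable fun p : 𝓧 × 𝓧 =>
              (Fin.snoc (Fin.snoc xs p.1) p.2 : Fin (m+2) → 𝓧) :=
            (measurable_snoc_pair (m+1)).comp
              (((measurable_snoc_right xs).comp measurable_fst).prodMk measurable_snd)
          rw [two_step_eq ν ψ ψ0 ξ hξ xs, Measure.map_map (measurable_comp_perm _) hG]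
          have hGs : (fun v : Fin (m+2) → 𝓧 =>
                v ∘ (Equiv.swap (Fin.castSucc (Fin.last m)) (Fin.succ (Fin.last m))))
                ∘ (fun p : 𝓧 × 𝓧 => (Fin.snoc (Fin.snoc xs p.1) p.2 : Fin (m+2) → 𝓧))
              = (fun p : 𝓧 × 𝓧 => (Fin.snoc (Fin.snoc xs p.1) p.2 : Fin (m+2) → 𝓧))
                ∘ Prod.swap :=
            funext fun p => snoc_snoc_comp_swap xs p.1 p.2
          rw [hGs, ← Measure.map_map hG measurable_swap,
            urn_pair_swap ν ψ ψ0 ξ hna hξ xs, ← two_step_eq ν ψ ψ0 ξ hξ xs]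
        rw [urnLaw_succ, urnLaw_succ,
          Measure.bind_bind (measurable_urnK ν ψ ψ0 ξ hξ m).aemeasurable
            (measurable_urnK ν ψ ψ0 ξ hξ (m+1)).aemeasurable,
          Measure.map_bind' hbb (measurable_comp_perm _),
          show (fun xs => ((urnK ν ψ ψ0 ξ m xs).bind (urnK ν ψ ψ0 ξ (m+1))).map
              (fun v => v ∘ (Equiv.swap (Fin.castSucc (Fin.last m))
                (Fin.succ (Fin.last m)))))
            = fun xs => (urnK ν ψ ψ0 ξ m xs).bind (urnK ν ψ ψ0 ξ (m+1)) from funext hpt,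
          ← Measure.bind_bind (measurable_urnK ν ψ ψ0 ξ hξ m).aemeasurable
            (measurable_urnK ν ψ ψ0 ξ hξ (m+1)).aemeasurable,
          ← urnLaw_succ, ← urnLaw_succ]
    intro σ
    have hσ : σ ∈ Submonoid.closure
        (Set.range fun k : Fin i => Equiv.swap (Fin.castSucc k) (Fin.succ k)) := by
      rw [Equiv.Perm.mclosure_swap_castSucc_succ i]; trivial
    induction hσ using Submonoid.closure_induction with
    | mem τ hτ => obtain ⟨k, rfl⟩ := hτ; exact hgen k
    | one =>
      have h1 : (fun v : Fin (i+1) → 𝓧 => v ∘ (1 : Equiv.Perm (Fin (i+1)))) = id := rfl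
      rw [h1, Measure.map_id]
    | mul τ ρ hτ hρ Pτ Pρ =>
      have hm : (fun v : Fin (i+1) → 𝓧 => v ∘ (τ * ρ))
          = (fun v : Fin (i+1) → 𝓧 => v ∘ ρ) ∘ (fun v => v ∘ τ) := rfl
      rw [hm, ← Measure.map_map (measurable_comp_perm ρ) (measurable_comp_perm τ), Pτ, Pρ]
end

section
/- Under the Exchangeability Condition (q_{j,i} = ψ(e_{j,i}), q_{0,i} = ψ₀(n(p_i)), row sums equal ξ(i) > 0) and with non-atomic base measure ν, the joint law of (X_1,...,X_i) from the generalized Pólya urn satisfies P{X_1 ∈ dx_1,...,X_i ∈ dx_i} = D_i^{-1} [∏_{k=1}^{n(p_i)-1} ψ₀(k)] ∏_{j=1}^{n(p_i)} [ν(dx_j*) I{dx_l = dx_j* : l ∈ C_{j,i}} · ψ(1)ψ(2)···ψ(e_{j,i}-1)], where D_i = ξ(1)ξ(2)···ξ(i-1), and this expression is a symmetric function of (dx_1,...,dx_i). -/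
open MeasureTheory ProbabilityTheory ENNReal Filter

namespace UrnAux
variable {𝓧 : Type*}

theorem count_ofFn [DecidableEq 𝓧] {i : ℕ} (xs : Fin i → 𝓧) (x : 𝓧) :
    (List.ofFn xs).count x = (Finset.univ.filter (fun m => xs m = x)).card := by
  rw [List.ofFn_eq_map, List.count_eq_countP, List.countP_map, Finset.card_filter]
  simp only [Fin.univ_def, Finset.sum_mk, Multiset.map_coe, Multiset.sum_coe]
  change _ = ((List.finRange i).map fun m => if xs m = x then 1 else 0).sum
  induction List.finRange i with
  | nil => simp
  | cons a l ih =>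
    simp only [List.countP_cons, List.map_cons, List.sum_cons, ih, Function.comp]
    by_cases h : xs a = x <;> simp [h, Nat.add_comm]

theorem toFinset_ofFn [DecidableEq 𝓧] {i : ℕ} (xs : Fin i → 𝓧) :
    (List.ofFn xs).toFinset = Finset.image xs Finset.univ := by
  ext a; simp [List.mem_ofFn]

theorem listSum_apply [MeasurableSpace 𝓧] (μs : List (Measure 𝓧)) (A : Set 𝓧) :
    μs.sum A = ((μs.map (fun μ => μ A)).sum) := by
  induction μs with
  | nil => simp
  | cons μ l ih => simp [Measure.add_apply, ih]

theorem urnStep_ofFn_apply [DecidableEq 𝓧] [MeasurableSpace 𝓧] [MeasurableSingletonClass 𝓧]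
    (ν : Measure 𝓧) (ψ ψ0 ξ : ℕ → NNReal) {i : ℕ} (xs : Fin i → 𝓧) (A : Set 𝓧) :
    urnStep ν ψ ψ0 ξ (List.ofFn xs) A
      = (ξ i : ℝ≥0∞)⁻¹ * ((ψ0 (Finset.image xs Finset.univ).card : ℝ≥0∞) * ν A
          + ∑ x ∈ Finset.image xs Finset.univ,
              (ψ ((Finset.univ.filter fun m => xs m = x).card) : ℝ≥0∞) * A.indicator 1 x) := by
  have hinst : (Classical.decEq 𝓧) = ‹DecidableEq 𝓧› := Subsingleton.elim _ _
  rw [urnStep]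
  rw [hinst]
  have hded : (List.ofFn xs).dedup.length = (Finset.image xs Finset.univ).card := by
    rw [← toFinset_ofFn xs, List.card_toFinset]
  rw [Measure.smul_apply, Measure.add_apply, Measure.smul_apply, listSum_apply, List.map_map,
    List.length_ofFn, hded, smul_eq_mul, smul_eq_mul]
  congr 1
  congr 1
  have : ∀ x : 𝓧, ((fun μ : Measure 𝓧 => μ A) ∘ fun x => (ψ ((List.ofFn xs).count x) : ℝ≥0∞) • Measure.dirac x) x
      = (fun x => (ψ ((Finset.univ.filter fun m => xs m = x).card) : ℝ≥0∞) * A.indicator 1 x) x := by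
    intro x
    simp only [Function.comp, Measure.smul_apply, smul_eq_mul, Measure.dirac_apply, count_ofFn]
  rw [List.map_congr_left (fun x _ => this x)]
  rw [← List.sum_toFinset _ (List.nodup_dedup _)]
  rw [show (List.ofFn xs).dedup.toFinset = (List.ofFn xs).toFinset by ext a; simp [List.mem_dedup],
    toFinset_ofFn]

theorem smul_inv_mul_ennreal (n : ℕ) (hn : n ≠ 0) (a : ℝ≥0∞) : n • ((n : ℝ≥0∞)⁻¹ * a) = a := by
  rw [nsmul_eq_mul, ← mul_assoc, ENNReal.mul_inv_cancel (by exact_mod_cast hn) (by simp), one_mul]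

theorem sum_image_eq [DecidableEq 𝓧] {i : ℕ} (xs : Fin i → 𝓧) (f : 𝓧 → ℝ≥0∞) :
    ∑ x ∈ Finset.image xs Finset.univ, f x
      = ∑ l : Fin i, ((Finset.univ.filter fun m => xs m = xs l).card : ℝ≥0∞)⁻¹ * f (xs l) := by
  rw [Finset.sum_comp (fun x => ((Finset.univ.filter fun m => xs m = x).card : ℝ≥0∞)⁻¹ * f x) xs]
  refine Finset.sum_congr rfl (fun x hx => ?_)
  refine (smul_inv_mul_ennreal _ ?_ _).symm
  obtain ⟨l, -, rfl⟩ := Finset.mem_image.1 hx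
  simp only [ne_eq, Finset.card_eq_zero, Finset.filter_eq_empty_iff, not_forall]
  exact ⟨l, by simp⟩

theorem meas_of_nat {α : Type*} [MeasurableSpace α] (f : ℕ → α) : Measurable f :=
  fun _ _ => trivial

section Meas
set_option linter.unusedSectionVars false
variable [MetricSpace 𝓧] [TopologicalSpace.SeparableSpace 𝓧] [MeasurableSpace 𝓧] [BorelSpace 𝓧]

instance : SecondCountableTopology 𝓧 := UniformSpace.secondCountable_of_separable 𝓧

theorem measSet_eq {α : Type*} [MeasurableSpace α] {f g : α → 𝓧} (hf : Measurable f)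
    (hg : Measurable g) : MeasurableSet {a | f a = g a} :=
  MeasureTheory.StronglyMeasurable.measurableSet_eq_fun hf.stronglyMeasurable hg.stronglyMeasurable

theorem meas_fibcard [DecidableEq 𝓧] {i : ℕ} (l : Fin i) :
    Measurable fun xs : Fin i → 𝓧 => (Finset.univ.filter fun m => xs m = xs l).card := by
  simp only [Finset.card_filter]
  refine Finset.measurable_sum _ (fun m _ => ?_)
  have : MeasurableSet {xs : Fin i → 𝓧 | xs m = xs l} :=
    measSet_eq (measurable_pi_apply m) (measurable_pi_apply l)
  exact Measurable.ite this measurable_const measurable_const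

theorem meas_snoc {i : ℕ} :
    Measurable (fun p : (Fin i → 𝓧) × 𝓧 => (Fin.snoc p.1 p.2 : Fin (i+1) → 𝓧)) := by
  apply measurable_pi_lambda
  intro k
  refine Fin.lastCases ?_ ?_ k
  · simpa using measurable_snd
  · intro l; simp; exact (measurable_pi_apply l).comp measurable_fst

theorem meas_cardimg [DecidableEq 𝓧] {i : ℕ} :
    Measurable fun xs : Fin i → 𝓧 => (Finset.image xs Finset.univ).card := by
  have key : ∀ xs : Fin i → 𝓧, ((Finset.image xs Finset.univ).card : ℝ≥0∞)
      = ∑ l : Fin i, ((Finset.univ.filter fun m => xs m = xs l).card : ℝ≥0∞)⁻¹ := by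
    intro xs
    rw [show ((Finset.image xs Finset.univ).card : ℝ≥0∞)
        = ∑ x ∈ Finset.image xs Finset.univ, (1 : ℝ≥0∞) by simp, sum_image_eq]
    simp
  have h1 : Measurable fun xs : Fin i → 𝓧 => ((Finset.image xs Finset.univ).card : ℝ≥0∞) := by
    simp only [key]
    exact Finset.measurable_sum _
      (fun l _ => (meas_of_nat (fun k => ((k : ℝ≥0∞))⁻¹)).comp (meas_fibcard l))
  refine measurable_to_countable' (fun k => ?_)
  have : (fun xs : Fin i → 𝓧 => (Finset.image xs Finset.univ).card) ⁻¹' {k}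
      = (fun xs : Fin i → 𝓧 => ((Finset.image xs Finset.univ).card : ℝ≥0∞)) ⁻¹' {(k : ℝ≥0∞)} := by
    ext xs; simp [Nat.cast_inj]
  rw [this]
  exact h1 (measurableSet_singleton _)

theorem meas_kernel [DecidableEq 𝓧] (ν : Measure 𝓧) [SFinite ν] (ψ ψ0 ξ : ℕ → NNReal) (i : ℕ) :
    Measurable fun xs : Fin i → 𝓧 =>
      ((urnStep ν ψ ψ0 ξ (List.ofFn xs)).map (Fin.snoc xs) : Measure (Fin (i+1) → 𝓧)) := by
  apply Measure.measurable_of_measurable_coe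
  intro s hs
  have hsnoc1 : ∀ xs : Fin i → 𝓧, Measurable (fun x => (Fin.snoc xs x : Fin (i+1) → 𝓧)) :=
    fun xs => meas_snoc.comp (measurable_const.prodMk measurable_id)
  have hfun : (fun xs : Fin i → 𝓧 => (((urnStep ν ψ ψ0 ξ (List.ofFn xs)).map (Fin.snoc xs) : Measure (Fin (i+1) → 𝓧))) s)
      = fun xs : Fin i → 𝓧 => (ξ i : ℝ≥0∞)⁻¹ *
          ((ψ0 (Finset.image xs Finset.univ).card : ℝ≥0∞) *
              ν ((fun x => (Fin.snoc xs x : Fin (i+1) → 𝓧)) ⁻¹' s)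
            + ∑ l : Fin i, (((Finset.univ.filter fun m => xs m = xs l).card : ℝ≥0∞))⁻¹ *
                ((ψ ((Finset.univ.filter fun m => xs m = xs l).card) : ℝ≥0∞) *
                  ((fun x => (Fin.snoc xs x : Fin (i+1) → 𝓧)) ⁻¹' s).indicator 1 (xs l))) := by
    funext xs
    rw [Measure.map_apply (hsnoc1 xs) hs, urnStep_ofFn_apply, sum_image_eq]
  rw [hfun]
  refine measurable_const.mul (Measurable.add ?_ ?_)
  · refine Measurable.mul ((meas_of_nat (fun k => (ψ0 k : ℝ≥0∞))).comp meas_cardimg) ?_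
    have ht : MeasurableSet ((fun p : (Fin i → 𝓧) × 𝓧 => (Fin.snoc p.1 p.2 : Fin (i+1) → 𝓧)) ⁻¹' s) :=
      meas_snoc hs
    exact measurable_measure_prodMk_left ht
  · refine Finset.measurable_sum _ (fun l _ => ?_)
    refine Measurable.mul ((meas_of_nat (fun k => ((k : ℝ≥0∞))⁻¹)).comp (meas_fibcard l)) ?_
    refine Measurable.mul ((meas_of_nat (fun k => (ψ k : ℝ≥0∞))).comp (meas_fibcard l)) ?_
    have hm : Measurable fun xs : Fin i → 𝓧 => (Fin.snoc xs (xs l) : Fin (i+1) → 𝓧) :=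
      meas_snoc.comp (measurable_id.prodMk (measurable_pi_apply l))
    have : (fun xs : Fin i → 𝓧 =>
        ((fun x => (Fin.snoc xs x : Fin (i+1) → 𝓧)) ⁻¹' s).indicator 1 (xs l))
        = fun xs : Fin i → 𝓧 => s.indicator (1 : (Fin (i+1) → 𝓧) → ℝ≥0∞) (Fin.snoc xs (xs l)) := by
      funext xs
      rfl
    rw [this]
    exact (measurable_const.indicator hs).comp hm

/-- The cluster event. -/
def urnEvent {i n : ℕ} (C : Fin n → Finset (Fin i)) (B : Fin n → Set 𝓧) : Set (Fin i → 𝓧) :=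
  {v | (∀ j, ∀ l ∈ C j, v l ∈ B j) ∧ (∀ l m : Fin i, v l = v m ↔ ∃ j, l ∈ C j ∧ m ∈ C j)}

theorem meas_urnEvent {i n : ℕ} (C : Fin n → Finset (Fin i)) (B : Fin n → Set 𝓧)
    (hB : ∀ j, MeasurableSet (B j)) : MeasurableSet (urnEvent C B) := by
  have : urnEvent C B = (⋂ j, ⋂ l ∈ C j, (fun v : Fin i → 𝓧 => v l) ⁻¹' B j) ∩
      ⋂ l, ⋂ m, {v : Fin i → 𝓧 | v l = v m ↔ ∃ j, l ∈ C j ∧ m ∈ C j} := by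
    ext v
    simp only [urnEvent, Set.mem_setOf_eq, Set.mem_inter_iff, Set.mem_iInter, Set.mem_preimage]
  rw [this]
  refine MeasurableSet.inter ?_ ?_
  · exact MeasurableSet.iInter fun j => MeasurableSet.iInter fun l => MeasurableSet.iInter
      fun _ => (measurable_pi_apply l) (hB j)
  · refine MeasurableSet.iInter fun l => MeasurableSet.iInter fun m => ?_
    by_cases hq : ∃ j, l ∈ C j ∧ m ∈ C j
    · have : {v : Fin i → 𝓧 | v l = v m ↔ ∃ j, l ∈ C j ∧ m ∈ C j} = {v | v l = v m} := by
        ext v; simp [hq]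
      rw [this]; exact measSet_eq (measurable_pi_apply l) (measurable_pi_apply m)
    · have : {v : Fin i → 𝓧 | v l = v m ↔ ∃ j, l ∈ C j ∧ m ∈ C j} = {v | v l = v m}ᶜ := by
        ext v; simp [hq]
      rw [this]
      exact (measSet_eq (measurable_pi_apply l) (measurable_pi_apply m)).compl

theorem fiber_eq_block [DecidableEq 𝓧] {i n : ℕ} {C : Fin n → Finset (Fin i)} {B : Fin n → Set 𝓧}
    (hcover : ∀ l : Fin i, ∃! j, l ∈ C j) {xs : Fin i → 𝓧} (hxs : xs ∈ urnEvent C B)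
    {l : Fin i} {j : Fin n} (hl : l ∈ C j) :
    (Finset.univ.filter fun m => xs m = xs l) = C j := by
  ext m
  simp only [Finset.mem_filter, Finset.mem_univ, true_and]
  constructor
  · intro h
    obtain ⟨j', hm, hl'⟩ := (hxs.2 m l).1 h
    rwa [(hcover l).unique hl' hl] at hm
  · intro hm
    exact (hxs.2 m l).2 ⟨j, hm, hl⟩

theorem cardimg_eq [DecidableEq 𝓧] {i n : ℕ} {C : Fin n → Finset (Fin i)} {B : Fin n → Set 𝓧}
    (hcover : ∀ l : Fin i, ∃! j, l ∈ C j) (hne : ∀ j, (C j).Nonempty)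
    {xs : Fin i → 𝓧} (hxs : xs ∈ urnEvent C B) :
    (Finset.image xs Finset.univ).card = n := by
  classical
  set blk : Fin i → Fin n := fun l => (hcover l).choose with hblk
  have hblkmem : ∀ l, l ∈ C (blk l) := fun l => (hcover l).choose_spec.1
  have hblkuniq : ∀ l j, l ∈ C j → blk l = j := fun l j hj =>
    ((hcover l).choose_spec.2 j hj).symm
  have key : ((Finset.image xs Finset.univ).card : ℝ≥0∞) = (n : ℝ≥0∞) := by
    rw [show ((Finset.image xs Finset.univ).card : ℝ≥0∞)
        = ∑ x ∈ Finset.image xs Finset.univ, (1 : ℝ≥0∞) by simp, sum_image_eq]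
    have hfib : ∀ l : Fin i, (Finset.univ.filter fun m => xs m = xs l) = C (blk l) :=
      fun l => fiber_eq_block hcover hxs (hblkmem l)
    calc ∑ l : Fin i, ((Finset.univ.filter fun m => xs m = xs l).card : ℝ≥0∞)⁻¹ * 1
        = ∑ l : Fin i, (((C (blk l)).card : ℝ≥0∞))⁻¹ := by
          refine Finset.sum_congr rfl fun l _ => ?_; rw [hfib l, mul_one]
      _ = ∑ j : Fin n, ∑ l ∈ Finset.univ.filter (fun l => blk l = j),
            (((C (blk l)).card : ℝ≥0∞))⁻¹ := by
          rw [Finset.sum_fiberwise Finset.univ blk (fun l => (((C (blk l)).card : ℝ≥0∞))⁻¹)]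
      _ = ∑ j : Fin n, (1 : ℝ≥0∞) := by
          refine Finset.sum_congr rfl fun j _ => ?_
          have hfil : Finset.univ.filter (fun l => blk l = j) = C j := by
            ext l
            simp only [Finset.mem_filter, Finset.mem_univ, true_and]
            exact ⟨fun h => h ▸ hblkmem l, fun h => hblkuniq l j h⟩
          have hcard : (C j).card ≠ 0 := Finset.card_ne_zero_of_mem (hne j).choose_spec
          calc ∑ l ∈ Finset.univ.filter (fun l => blk l = j), (((C (blk l)).card : ℝ≥0∞))⁻¹
              = ∑ l ∈ C j, (((C j).card : ℝ≥0∞))⁻¹ :=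
                Finset.sum_congr hfil (fun l hl => by rw [hblkuniq l j (hfil ▸ hl)])
            _ = (C j).card • (((C j).card : ℝ≥0∞))⁻¹ := Finset.sum_const _
            _ = 1 := by
                rw [nsmul_eq_mul, ENNReal.mul_inv_cancel (by exact_mod_cast hcard) (by simp)]
      _ = (n : ℝ≥0∞) := by simp
  exact_mod_cast key

/-- Restriction of a block to the first `i` coordinates. -/
noncomputable def restr {i : ℕ} (s : Finset (Fin (i+1))) : Finset (Fin i) :=
  s.preimage Fin.castSucc (Fin.castSucc_injective i).injOn

theorem mem_restr {i : ℕ} {s : Finset (Fin (i+1))} {l : Fin i} :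
    l ∈ restr s ↔ Fin.castSucc l ∈ s := Finset.mem_preimage

theorem image_restr {i : ℕ} {s : Finset (Fin (i+1))} (h : Fin.last i ∉ s) :
    (restr s).image Fin.castSucc = s := by
  ext m
  simp only [Finset.mem_image]
  constructor
  · rintro ⟨l, hl, rfl⟩; exact mem_restr.1 hl
  · intro hm
    have hne : m ≠ Fin.last i := fun h' => h (h' ▸ hm)
    exact ⟨m.castPred hne, mem_restr.2 (by rwa [Fin.castSucc_castPred]), Fin.castSucc_castPred _ _⟩

theorem card_restr {i : ℕ} {s : Finset (Fin (i+1))} (h : Fin.last i ∉ s) :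
    (restr s).card = s.card := by
  conv_rhs => rw [← image_restr h]
  rw [Finset.card_image_of_injective _ (Fin.castSucc_injective i)]

theorem card_restr_mem {i : ℕ} {s : Finset (Fin (i+1))} (h : Fin.last i ∈ s) :
    (restr s).card + 1 = s.card := by
  have h1 : s = insert (Fin.last i) ((restr s).image Fin.castSucc) := by
    ext m
    simp only [Finset.mem_insert, Finset.mem_image]
    constructor
    · intro hm
      by_cases hne : m = Fin.last i
      · exact Or.inl hne
      · exact Or.inr ⟨m.castPred hne, mem_restr.2 (by rwa [Fin.castSucc_castPred]),
          Fin.castSucc_castPred _ _⟩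
    · rintro (rfl | ⟨l, hl, rfl⟩)
      · exact h
      · exact mem_restr.1 hl
  conv_rhs => rw [h1]
  rw [Finset.card_insert_of_notMem (by
    simp only [Finset.mem_image]
    rintro ⟨l, -, hl⟩
    exact (Fin.castSucc_lt_last l).ne hl),
    Finset.card_image_of_injective _ (Fin.castSucc_injective i)]

theorem urn_key [DecidableEq 𝓧] (ν : Measure 𝓧) [IsProbabilityMeasure ν]
    (hna : ∀ x : 𝓧, ν {x} = 0) (ψ ψ0 ξ : ℕ → NNReal)
    (hEC : ∀ s : Multiset ℕ, (∀ e ∈ s, 0 < e) → ψ0 (Multiset.card s) + (s.map ψ).sum = ξ s.sum)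
    (hξ : ∀ k, 0 < ξ k) :
    ∀ (i n : ℕ) (C : Fin n → Finset (Fin i)), (∀ l, ∃! j, l ∈ C j) → (∀ j, (C j).Nonempty) →
      ∀ (B : Fin n → Set 𝓧), (∀ j, MeasurableSet (B j)) →
        (∀ j k, j ≠ k → Disjoint (B j) (B k)) →
        urnLaw ν ψ ψ0 ξ i (urnEvent C B)
          = (∏ k ∈ Finset.range (i - 1), (ξ (k+1) : ℝ≥0∞))⁻¹ *
              (∏ k ∈ Finset.range (n - 1), (ψ0 (k+1) : ℝ≥0∞)) *
              ∏ j : Fin n, (ν (B j) * ∏ m ∈ Finset.range ((C j).card - 1), (ψ (m+1) : ℝ≥0∞)) := by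
  have hψ00 : (ψ0 0 : ℝ≥0∞) = (ξ 0 : ℝ≥0∞) := by
    have := hEC 0 (by simp)
    simp only [Multiset.card_zero, Multiset.map_zero, Multiset.sum_zero, add_zero] at this
    exact congrArg (fun x : NNReal => (x : ℝ≥0∞)) this
  have hξ0 : ∀ k, (ξ k : ℝ≥0∞) ≠ 0 := fun k => by
    simpa using (hξ k).ne'
  have hξtop : ∀ k, (ξ k : ℝ≥0∞) ≠ ⊤ := fun k => ENNReal.coe_ne_top
  intro i
  induction i with
  | zero =>
    intro n C hcover hne B hB hBdisj
    cases n with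
    | succ n => exact (hne 0).choose.elim0
    | zero =>
      have hE : urnEvent C B = Set.univ := by
        ext v
        refine ⟨fun _ => trivial, fun _ => ⟨fun j => j.elim0, fun l => l.elim0⟩⟩
      rw [urnLaw, hE]
      simp
  | succ i IH =>
    intro n C hcover hne B hB hBdisj
    cases n with
    | zero => exact (hcover (Fin.last i)).choose.elim0
    | succ n'' =>
    obtain ⟨j₀, hj₀, hj₀u⟩ := hcover (Fin.last i)
    have hmeasE : MeasurableSet (urnEvent C B) := meas_urnEvent C B hB
    have hkermeas := meas_kernel (𝓧 := 𝓧) ν ψ ψ0 ξ i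
    rw [urnLaw, Measure.bind_apply hmeasE hkermeas.aemeasurable]
    by_cases hA : C j₀ = {Fin.last i}
    · -- Case A : the last observation is a fresh value
      set C' : Fin n'' → Finset (Fin i) := fun j => restr (C (j₀.succAbove j)) with hC'def
      set B' : Fin n'' → Set 𝓧 := fun j => B (j₀.succAbove j) with hB'def
      have hNotLast : ∀ j : Fin n'', Fin.last i ∉ C (j₀.succAbove j) := by
        intro j hmem
        exact Fin.succAbove_ne j₀ j (hj₀u _ hmem)
      have hcover' : ∀ l : Fin i, ∃! j, l ∈ C' j := by
        intro l
        obtain ⟨J, hJ, hJu⟩ := hcover (Fin.castSucc l)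
        have hJne : J ≠ j₀ := by
          rintro rfl
          rw [hA, Finset.mem_singleton] at hJ
          exact (Fin.castSucc_lt_last l).ne hJ
        obtain ⟨k, hk⟩ := Fin.exists_succAbove_eq hJne
        refine ⟨k, mem_restr.2 (by rw [hk]; exact hJ), ?_⟩
        intro k' hk'
        have h1 : j₀.succAbove k' = J := hJu _ (mem_restr.1 hk')
        exact Fin.succAbove_right_injective (h1.trans hk.symm)
      have hne' : ∀ j, (C' j).Nonempty := by
        intro j
        obtain ⟨m, hm⟩ := hne (j₀.succAbove j)
        have hmne : m ≠ Fin.last i := fun h => hNotLast j (h ▸ hm)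
        exact ⟨m.castPred hmne, mem_restr.2 (by rwa [Fin.castSucc_castPred])⟩
      have hE'meas : MeasurableSet (urnEvent C' B') := meas_urnEvent C' B' (fun j => hB _)
      have hpre1 : ∀ xs : Fin i → 𝓧, xs ∈ urnEvent C' B' →
          (fun x : 𝓧 => (Fin.snoc xs x : Fin (i+1) → 𝓧)) ⁻¹' urnEvent C B
            = {x : 𝓧 | x ∈ B j₀ ∧ ∀ l : Fin i, x ≠ xs l} := by
        intro xs hxs
        obtain ⟨h1, h2⟩ := hxs
        ext x
        simp only [Set.mem_preimage, Set.mem_setOf_eq]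
        constructor
        · rintro ⟨g1, g2⟩
          refine ⟨?_, ?_⟩
          · have := g1 j₀ (Fin.last i) hj₀
            rwa [Fin.snoc_last] at this
          · intro l heq
            have heq2 : (Fin.snoc xs x : Fin (i+1) → 𝓧) (Fin.last i)
                = (Fin.snoc xs x : Fin (i+1) → 𝓧) (Fin.castSucc l) := by
              rw [Fin.snoc_last, Fin.snoc_castSucc]; exact heq
            obtain ⟨j, hjl, hjc⟩ := (g2 _ _).1 heq2
            have hj : j = j₀ := hj₀u j hjl
            subst hj
            rw [hA, Finset.mem_singleton] at hjc
            exact (Fin.castSucc_lt_last l).ne hjc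
        · rintro ⟨hxB, hfresh⟩
          constructor
          · intro j m hm
            rcases Fin.eq_castSucc_or_eq_last m with ⟨m', rfl⟩ | rfl
            · have hjne : j ≠ j₀ := by
                rintro rfl
                rw [hA, Finset.mem_singleton] at hm
                exact (Fin.castSucc_lt_last m').ne hm
              obtain ⟨k, hk⟩ := Fin.exists_succAbove_eq hjne
              rw [Fin.snoc_castSucc]
              have hmem : m' ∈ C' k := mem_restr.2 (by rw [hk]; exact hm)
              have := h1 k m' hmem
              rw [hB'def] at this
              rw [← hk]
              exact this
            · have hj : j = j₀ := hj₀u j hm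
              subst hj
              rw [Fin.snoc_last]; exact hxB
          · intro l m
            rcases Fin.eq_castSucc_or_eq_last l with ⟨l', rfl⟩ | rfl <;>
              rcases Fin.eq_castSucc_or_eq_last m with ⟨m', rfl⟩ | rfl
            · rw [Fin.snoc_castSucc, Fin.snoc_castSucc, h2 l' m']
              constructor
              · rintro ⟨k, hk1, hk2⟩
                exact ⟨j₀.succAbove k, mem_restr.1 hk1, mem_restr.1 hk2⟩
              · rintro ⟨j, hj1, hj2⟩
                have hjne : j ≠ j₀ := by
                  rintro rfl
                  rw [hA, Finset.mem_singleton] at hj1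
                  exact (Fin.castSucc_lt_last l').ne hj1
                obtain ⟨k, hk⟩ := Fin.exists_succAbove_eq hjne
                exact ⟨k, mem_restr.2 (by rw [hk]; exact hj1),
                  mem_restr.2 (by rw [hk]; exact hj2)⟩
            · rw [Fin.snoc_castSucc, Fin.snoc_last]
              constructor
              · intro h; exact absurd h.symm (hfresh l')
              · rintro ⟨j, hj1, hj2⟩
                have hj : j = j₀ := hj₀u j hj2
                subst hj
                rw [hA, Finset.mem_singleton] at hj1
                exact absurd hj1 (Fin.castSucc_lt_last l').ne
            · rw [Fin.snoc_castSucc, Fin.snoc_last]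
              constructor
              · intro h; exact absurd h (hfresh m')
              · rintro ⟨j, hj1, hj2⟩
                have hj : j = j₀ := hj₀u j hj1
                subst hj
                rw [hA, Finset.mem_singleton] at hj2
                exact absurd hj2 (Fin.castSucc_lt_last m').ne
            · exact iff_of_true rfl ⟨j₀, hj₀, hj₀⟩
      have hpre0 : ∀ xs : Fin i → 𝓧, xs ∉ urnEvent C' B' →
          (fun x : 𝓧 => (Fin.snoc xs x : Fin (i+1) → 𝓧)) ⁻¹' urnEvent C B = ∅ := by
        intro xs hxs
        rw [Set.eq_empty_iff_forall_notMem]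
        intro x hx
        obtain ⟨g1, g2⟩ := hx
        refine hxs ⟨?_, ?_⟩
        · intro k m' hm'
          have h' : (Fin.snoc xs x : Fin (i+1) → 𝓧) (Fin.castSucc m') ∈ B (j₀.succAbove k) :=
            g1 (j₀.succAbove k) (Fin.castSucc m') (mem_restr.1 hm')
          rwa [Fin.snoc_castSucc] at h'
        · intro l m
          have hg : ((Fin.snoc xs x : Fin (i+1) → 𝓧) (Fin.castSucc l)
              = (Fin.snoc xs x : Fin (i+1) → 𝓧) (Fin.castSucc m))
              ↔ ∃ j, Fin.castSucc l ∈ C j ∧ Fin.castSucc m ∈ C j := g2 _ _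
          rw [Fin.snoc_castSucc, Fin.snoc_castSucc] at hg
          rw [hg]
          constructor
          · rintro ⟨j, hj1, hj2⟩
            have hjne : j ≠ j₀ := by
              rintro rfl
              rw [hA, Finset.mem_singleton] at hj1
              exact (Fin.castSucc_lt_last l).ne hj1
            obtain ⟨k, hk⟩ := Fin.exists_succAbove_eq hjne
            exact ⟨k, mem_restr.2 (by rw [hk]; exact hj1),
              mem_restr.2 (by rw [hk]; exact hj2)⟩
          · rintro ⟨k, hk1, hk2⟩
            exact ⟨j₀.succAbove k, mem_restr.1 hk1, mem_restr.1 hk2⟩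
      have hker : ∀ xs : Fin i → 𝓧,
          ((urnStep ν ψ ψ0 ξ (List.ofFn xs)).map (Fin.snoc xs) : Measure (Fin (i+1) → 𝓧))
              (urnEvent C B)
            = (urnEvent C' B').indicator
                (fun _ => (ξ i : ℝ≥0∞)⁻¹ * ((ψ0 n'' : ℝ≥0∞) * ν (B j₀))) xs := by
        intro xs
        have hsnocm : Measurable (fun x : 𝓧 => (Fin.snoc xs x : Fin (i+1) → 𝓧)) :=
          meas_snoc.comp (measurable_const.prodMk measurable_id)
        rw [Measure.map_apply hsnocm hmeasE, urnStep_ofFn_apply]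
        by_cases hxs : xs ∈ urnEvent C' B'
        · rw [Set.indicator_of_mem hxs, hpre1 xs hxs]
          have hν : ν {x : 𝓧 | x ∈ B j₀ ∧ ∀ l : Fin i, x ≠ xs l} = ν (B j₀) := by
            have hset : {x : 𝓧 | x ∈ B j₀ ∧ ∀ l : Fin i, x ≠ xs l}
                = B j₀ \ ⋃ l : Fin i, {xs l} := by
              ext x
              simp only [Set.mem_setOf_eq, Set.mem_diff, Set.mem_iUnion, Set.mem_singleton_iff,
                not_exists]
            rw [hset, measure_diff_null (measure_iUnion_null fun l => hna (xs l))]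
          have hzero : ∑ x ∈ Finset.image xs Finset.univ,
              (ψ ((Finset.univ.filter fun m => xs m = x).card) : ℝ≥0∞) *
                Set.indicator {x : 𝓧 | x ∈ B j₀ ∧ ∀ l : Fin i, x ≠ xs l} 1 x = 0 := by
            refine Finset.sum_eq_zero fun x hx => ?_
            obtain ⟨l, -, rfl⟩ := Finset.mem_image.1 hx
            rw [Set.indicator_of_notMem (fun hmem => hmem.2 l rfl), mul_zero]
          rw [hzero, cardimg_eq hcover' hne' hxs, hν, add_zero]
        · rw [Set.indicator_of_notMem hxs, hpre0 xs hxs]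
          simp
      have hIH := IH n'' C' hcover' hne' B' (fun j => hB _)
        (fun j k hjk => hBdisj _ _ (fun h => hjk (Fin.succAbove_right_injective h)))
      rw [lintegral_congr hker, lintegral_indicator_const hE'meas, hIH]
      -- arithmetic
      have hcardj₀ : (C j₀).card = 1 := by rw [hA]; simp
      have hcard' : ∀ k : Fin n'', (C' k).card = (C (j₀.succAbove k)).card :=
        fun k => card_restr (hNotLast k)
      rw [Fin.prod_univ_succAbove
        (fun j => ν (B j) * ∏ m ∈ Finset.range ((C j).card - 1), (ψ (m+1) : ℝ≥0∞)) j₀]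
      simp only [hcardj₀]
      rcases Nat.eq_zero_or_pos i with hi | hi
      · subst hi
        have hn''0 : n'' = 0 := by
          by_contra h
          exact ((hne' ⟨0, Nat.pos_of_ne_zero h⟩).choose).elim0
        subst hn''0
        simp only [Nat.sub_self, Finset.range_zero, Finset.prod_empty, Finset.range_one,
          Nat.zero_sub, Finset.univ_eq_empty, Finset.prod_const_one, mul_one, one_mul,
          Nat.sub_zero, inv_one]
        rw [hψ00, ← mul_assoc, ENNReal.inv_mul_cancel (hξ0 0) (hξtop 0), one_mul]
      · obtain ⟨i', rfl⟩ : ∃ i', i = i' + 1 := ⟨i - 1, by omega⟩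
        rcases Nat.eq_zero_or_pos n'' with h0 | hn''pos
        · subst h0
          exact ((hcover' ⟨0, hi⟩).choose).elim0
        obtain ⟨m'', rfl⟩ : ∃ m'', n'' = m'' + 1 := ⟨n'' - 1, by omega⟩
        simp only [Nat.add_sub_cancel, Finset.prod_range_succ]
        rw [ENNReal.mul_inv (Or.inr ENNReal.coe_ne_top) (Or.inr (hξ0 _))]
        have hprodC : ∀ k, ∏ m ∈ Finset.range ((C' k).card - 1), (ψ (m+1) : ℝ≥0∞)
            = ∏ m ∈ Finset.range ((C (j₀.succAbove k)).card - 1), (ψ (m+1) : ℝ≥0∞) := by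
          intro k; rw [hcard' k]
        simp only [hprodC]
        ring
    · -- Case B : the last observation repeats an old value
      set C' : Fin (n''+1) → Finset (Fin i) := fun j => restr (C j) with hC'def
      have hcover' : ∀ l : Fin i, ∃! j, l ∈ C' j := by
        intro l
        obtain ⟨J, hJ, hJu⟩ := hcover (Fin.castSucc l)
        exact ⟨J, mem_restr.2 hJ, fun j hj => hJu j (mem_restr.1 hj)⟩
      have hne' : ∀ j, (C' j).Nonempty := by
        intro j
        rcases eq_or_ne j j₀ with rfl | hj
        · have hex : ∃ m ∈ C j, m ≠ Fin.last i := by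
            by_contra hcon
            push_neg at hcon
            apply hA
            ext m
            simp only [Finset.mem_singleton]
            exact ⟨fun hm => hcon m hm, fun hm => by rw [hm]; exact hj₀⟩
          obtain ⟨m, hm, hmne⟩ := hex
          exact ⟨m.castPred hmne, mem_restr.2 (by rwa [Fin.castSucc_castPred])⟩
        · obtain ⟨m, hm⟩ := hne j
          have hmne : m ≠ Fin.last i := fun h => hj (hj₀u j (h ▸ hm))
          exact ⟨m.castPred hmne, mem_restr.2 (by rwa [Fin.castSucc_castPred])⟩
      obtain ⟨l₀, hl₀⟩ := hne' j₀
      have hipos : 0 < i := l₀.pos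
      have hE'meas : MeasurableSet (urnEvent C' B) := meas_urnEvent C' B hB
      have htrans : ∀ l m : Fin i,
          (∃ j, Fin.castSucc l ∈ C j ∧ Fin.castSucc m ∈ C j) ↔ ∃ j, l ∈ C' j ∧ m ∈ C' j := by
        intro l m
        constructor
        · rintro ⟨j, hj1, hj2⟩; exact ⟨j, mem_restr.2 hj1, mem_restr.2 hj2⟩
        · rintro ⟨j, hj1, hj2⟩; exact ⟨j, mem_restr.1 hj1, mem_restr.1 hj2⟩
      have hpre1 : ∀ xs : Fin i → 𝓧, xs ∈ urnEvent C' B →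
          (fun x : 𝓧 => (Fin.snoc xs x : Fin (i+1) → 𝓧)) ⁻¹' urnEvent C B = {xs l₀} := by
        intro xs hxs
        obtain ⟨h1, h2⟩ := hxs
        ext x
        simp only [Set.mem_preimage, Set.mem_singleton_iff]
        constructor
        · rintro ⟨g1, g2⟩
          have heq := (g2 (Fin.last i) (Fin.castSucc l₀)).2
            ⟨j₀, hj₀, mem_restr.1 hl₀⟩
          rwa [Fin.snoc_last, Fin.snoc_castSucc] at heq
        · rintro rfl
          constructor
          · intro j m hm
            rcases Fin.eq_castSucc_or_eq_last m with ⟨m', rfl⟩ | rfl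
            · rw [Fin.snoc_castSucc]
              exact h1 j m' (mem_restr.2 hm)
            · have hj : j = j₀ := hj₀u j hm
              subst hj
              rw [Fin.snoc_last]
              exact h1 _ l₀ hl₀
          · intro l m
            rcases Fin.eq_castSucc_or_eq_last l with ⟨l', rfl⟩ | rfl <;>
              rcases Fin.eq_castSucc_or_eq_last m with ⟨m', rfl⟩ | rfl
            · rw [Fin.snoc_castSucc, Fin.snoc_castSucc, h2 l' m']
              exact (htrans l' m').symm
            · rw [Fin.snoc_castSucc, Fin.snoc_last, h2 l' l₀]
              constructor
              · rintro ⟨j, hj1, hj2⟩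
                have hj : j = j₀ := ExistsUnique.unique (hcover' l₀) hj2 hl₀
                subst hj
                exact ⟨j, mem_restr.1 hj1, hj₀⟩
              · rintro ⟨j, hj1, hj2⟩
                have hj : j = j₀ := hj₀u j hj2
                subst hj
                exact ⟨j, mem_restr.2 hj1, hl₀⟩
            · rw [Fin.snoc_last, Fin.snoc_castSucc, h2 l₀ m']
              constructor
              · rintro ⟨j, hj1, hj2⟩
                have hj : j = j₀ := ExistsUnique.unique (hcover' l₀) hj1 hl₀
                subst hj
                exact ⟨j, hj₀, mem_restr.1 hj2⟩
              · rintro ⟨j, hj1, hj2⟩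
                have hj : j = j₀ := hj₀u j hj1
                subst hj
                exact ⟨j, hl₀, mem_restr.2 hj2⟩
            · exact iff_of_true rfl ⟨j₀, hj₀, hj₀⟩
      have hpre0 : ∀ xs : Fin i → 𝓧, xs ∉ urnEvent C' B →
          (fun x : 𝓧 => (Fin.snoc xs x : Fin (i+1) → 𝓧)) ⁻¹' urnEvent C B = ∅ := by
        intro xs hxs
        rw [Set.eq_empty_iff_forall_notMem]
        intro x hx
        obtain ⟨g1, g2⟩ := hx
        refine hxs ⟨?_, ?_⟩
        · intro j m' hm'
          have h' : (Fin.snoc xs x : Fin (i+1) → 𝓧) (Fin.castSucc m') ∈ B j :=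
            g1 j (Fin.castSucc m') (mem_restr.1 hm')
          rwa [Fin.snoc_castSucc] at h'
        · intro l m
          have hg : ((Fin.snoc xs x : Fin (i+1) → 𝓧) (Fin.castSucc l)
              = (Fin.snoc xs x : Fin (i+1) → 𝓧) (Fin.castSucc m))
              ↔ ∃ j, Fin.castSucc l ∈ C j ∧ Fin.castSucc m ∈ C j := g2 _ _
          rw [Fin.snoc_castSucc, Fin.snoc_castSucc] at hg
          rw [hg]
          exact htrans l m
      have hker : ∀ xs : Fin i → 𝓧,
          ((urnStep ν ψ ψ0 ξ (List.ofFn xs)).map (Fin.snoc xs) : Measure (Fin (i+1) → 𝓧))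
              (urnEvent C B)
            = (urnEvent C' B).indicator
                (fun _ => (ξ i : ℝ≥0∞)⁻¹ * (ψ ((C' j₀).card) : ℝ≥0∞)) xs := by
        intro xs
        have hsnocm : Measurable (fun x : 𝓧 => (Fin.snoc xs x : Fin (i+1) → 𝓧)) :=
          meas_snoc.comp (measurable_const.prodMk measurable_id)
        rw [Measure.map_apply hsnocm hmeasE, urnStep_ofFn_apply]
        by_cases hxs : xs ∈ urnEvent C' B
        · rw [Set.indicator_of_mem hxs, hpre1 xs hxs]
          have hsum : ∑ x ∈ Finset.image xs Finset.univ,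
              (ψ ((Finset.univ.filter fun m => xs m = x).card) : ℝ≥0∞) *
                Set.indicator {xs l₀} 1 x = (ψ ((C' j₀).card) : ℝ≥0∞) := by
            rw [Finset.sum_eq_single_of_mem (xs l₀)
              (Finset.mem_image.2 ⟨l₀, Finset.mem_univ l₀, rfl⟩)
              (fun b _ hbne => by
                rw [Set.indicator_of_notMem (s := ({xs l₀} : Set 𝓧)) (f := 1) hbne, mul_zero])]
            rw [Set.indicator_of_mem (s := ({xs l₀} : Set 𝓧)) (f := 1) rfl,
              fiber_eq_block hcover' hxs hl₀]
            simp
          rw [hsum, hna (xs l₀), mul_zero, zero_add]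
        · rw [Set.indicator_of_notMem hxs, hpre0 xs hxs]
          simp
      have hIH := IH (n''+1) C' hcover' hne' B hB hBdisj
      rw [lintegral_congr hker, lintegral_indicator_const hE'meas, hIH]
      -- arithmetic
      have hsplit : (∏ j : Fin (n''+1), (ν (B j) *
            ∏ m ∈ Finset.range ((C j).card - 1), (ψ (m+1) : ℝ≥0∞)))
          = (ψ ((C' j₀).card) : ℝ≥0∞) * ∏ j : Fin (n''+1), (ν (B j) *
              ∏ m ∈ Finset.range ((C' j).card - 1), (ψ (m+1) : ℝ≥0∞)) := by
        rw [← Finset.mul_prod_erase Finset.univ _ (Finset.mem_univ j₀),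
          ← Finset.mul_prod_erase Finset.univ
            (fun j => ν (B j) * ∏ m ∈ Finset.range ((C' j).card - 1), (ψ (m+1) : ℝ≥0∞))
            (Finset.mem_univ j₀)]
        have herase : ∏ j ∈ Finset.univ.erase j₀,
            (ν (B j) * ∏ m ∈ Finset.range ((C j).card - 1), (ψ (m+1) : ℝ≥0∞))
            = ∏ j ∈ Finset.univ.erase j₀,
              (ν (B j) * ∏ m ∈ Finset.range ((C' j).card - 1), (ψ (m+1) : ℝ≥0∞)) := by
          refine Finset.prod_congr rfl fun j hj => ?_
          have hjne : j ≠ j₀ := Finset.ne_of_mem_erase hj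
          have hlast : Fin.last i ∉ C j := fun h => hjne (hj₀u j h)
          rw [card_restr hlast]
        rw [herase]
        have hcardrel : (C j₀).card - 1 = (C' j₀).card := by
          have h := card_restr_mem (s := C j₀) hj₀
          simp only [hC'def]
          omega
        obtain ⟨e, he⟩ : ∃ e, (C' j₀).card = e + 1 :=
          ⟨(C' j₀).card - 1, by have := Finset.card_pos.2 ⟨l₀, hl₀⟩; omega⟩
        rw [hcardrel, he, Finset.prod_range_succ, Nat.add_sub_cancel]
        ring
      rw [hsplit]
      obtain ⟨i', rfl⟩ : ∃ i', i = i' + 1 := ⟨i - 1, by omega⟩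
      simp only [Nat.add_sub_cancel, Finset.prod_range_succ]
      rw [ENNReal.mul_inv (Or.inr ENNReal.coe_ne_top) (Or.inr (hξ0 _))]
      ring


end Meas
end UrnAux

/-- **Joint-density formula.**  Under the Exchangeability Condition and a non-atomic
base measure `ν`, the joint law of `(X₁,…,X_i)` gives the event that the observations
cluster exactly according to a prescribed partition `C : Fin n → Finset (Fin i)` with the
`j`-th distinct value lying in `B j` (the `B j` pairwise disjoint and measurable) the mass
`D_i⁻¹ · [∏_{k=1}^{n-1} ψ₀(k)] · ∏_j [ν(B j) · ψ(1)⋯ψ(e_j − 1)]`, with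
`D_i = ξ(1)⋯ξ(i−1)`; moreover this expression is symmetric in the coordinates: permuting
`(x_1,…,x_i)` leaves the probability unchanged. -/
theorem urn_joint_density {𝓧 : Type*} [MetricSpace 𝓧] [CompleteSpace 𝓧]
    [TopologicalSpace.SeparableSpace 𝓧] [MeasurableSpace 𝓧] [BorelSpace 𝓧]
    (ν : Measure 𝓧) [IsProbabilityMeasure ν] (hna : ∀ x : 𝓧, ν {x} = 0)
    (ψ ψ0 ξ : ℕ → NNReal)
    (hEC : ∀ s : Multiset ℕ, (∀ e ∈ s, 0 < e) →
      ψ0 (Multiset.card s) + (s.map ψ).sum = ξ s.sum)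
    (hξ : ∀ i, 0 < ξ i)
    (i n : ℕ) (C : Fin n → Finset (Fin i))
    (hcover : ∀ l : Fin i, ∃! j : Fin n, l ∈ C j) (hne : ∀ j, (C j).Nonempty)
    (B : Fin n → Set 𝓧) (hB : ∀ j, MeasurableSet (B j))
    (hBdisj : ∀ j k, j ≠ k → Disjoint (B j) (B k)) :
    (urnLaw ν ψ ψ0 ξ i)
        {v : Fin i → 𝓧 |
          (∀ j, ∀ l ∈ C j, v l ∈ B j) ∧
          (∀ l m : Fin i, v l = v m ↔ ∃ j, l ∈ C j ∧ m ∈ C j)} =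
      (∏ k ∈ Finset.range (i - 1), (ξ (k+1) : ℝ≥0∞))⁻¹ *
        (∏ k ∈ Finset.range (n - 1), (ψ0 (k+1) : ℝ≥0∞)) *
        ∏ j : Fin n, (ν (B j) * ∏ m ∈ Finset.range ((C j).card - 1), (ψ (m+1) : ℝ≥0∞)) ∧
    ∀ σ : Equiv.Perm (Fin i),
      (urnLaw ν ψ ψ0 ξ i)
          {v : Fin i → 𝓧 |
            (∀ j, ∀ l ∈ C j, (v ∘ σ) l ∈ B j) ∧
            (∀ l m : Fin i, (v ∘ σ) l = (v ∘ σ) m ↔ ∃ j, l ∈ C j ∧ m ∈ C j)} =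
      (urnLaw ν ψ ψ0 ξ i)
          {v : Fin i → 𝓧 |
            (∀ j, ∀ l ∈ C j, v l ∈ B j) ∧
            (∀ l m : Fin i, v l = v m ↔ ∃ j, l ∈ C j ∧ m ∈ C j)} := by
  letI : DecidableEq 𝓧 := Classical.decEq 𝓧
  have key := UrnAux.urn_key ν hna ψ ψ0 ξ hEC hξ
  constructor
  · exact key i n C hcover hne B hB hBdisj
  · intro σ
    have hset : {v : Fin i → 𝓧 |
          (∀ j, ∀ l ∈ C j, (v ∘ σ) l ∈ B j) ∧
          (∀ l m : Fin i, (v ∘ σ) l = (v ∘ σ) m ↔ ∃ j, l ∈ C j ∧ m ∈ C j)}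
        = UrnAux.urnEvent (fun j => (C j).image σ) B := by
      ext v
      simp only [UrnAux.urnEvent, Set.mem_setOf_eq, Function.comp]
      constructor
      · rintro ⟨p1, p2⟩
        refine ⟨?_, ?_⟩
        · intro j a ha
          obtain ⟨l, hl, rfl⟩ := Finset.mem_image.1 ha
          exact p1 j l hl
        · intro a b
          have h := p2 (σ.symm a) (σ.symm b)
          rw [Equiv.apply_symm_apply, Equiv.apply_symm_apply] at h
          rw [h]
          constructor
          · rintro ⟨j, h1, h2⟩
            exact ⟨j, Finset.mem_image.2 ⟨_, h1, σ.apply_symm_apply a⟩,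
              Finset.mem_image.2 ⟨_, h2, σ.apply_symm_apply b⟩⟩
          · rintro ⟨j, h1, h2⟩
            obtain ⟨l, hl, rfl⟩ := Finset.mem_image.1 h1
            obtain ⟨m, hm, rfl⟩ := Finset.mem_image.1 h2
            rw [Equiv.symm_apply_apply, Equiv.symm_apply_apply]
            exact ⟨j, hl, hm⟩
      · rintro ⟨p1, p2⟩
        refine ⟨?_, ?_⟩
        · intro j l hl
          exact p1 j (σ l) (Finset.mem_image_of_mem σ hl)
        · intro l m
          rw [p2 (σ l) (σ m)]
          constructor
          · rintro ⟨j, h1, h2⟩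
            obtain ⟨l', hl', hle⟩ := Finset.mem_image.1 h1
            obtain ⟨m', hm', hme⟩ := Finset.mem_image.1 h2
            have hl2 : l' = l := σ.injective hle
            subst hl2
            have hm2 : m' = m := σ.injective hme
            subst hm2
            exact ⟨j, hl', hm'⟩
          · rintro ⟨j, h1, h2⟩
            exact ⟨j, Finset.mem_image_of_mem σ h1, Finset.mem_image_of_mem σ h2⟩
    have hcov2 : ∀ a : Fin i, ∃! j, a ∈ (C j).image σ := by
      intro a
      obtain ⟨j, hj, hju⟩ := hcover (σ.symm a)
      refine ⟨j, Finset.mem_image.2 ⟨_, hj, σ.apply_symm_apply a⟩, ?_⟩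
      intro k hk
      obtain ⟨l, hl, rfl⟩ := Finset.mem_image.1 hk
      exact hju k (by rwa [Equiv.symm_apply_apply])
    have hne2 : ∀ j, ((C j).image σ).Nonempty := fun j => (hne j).image σ
    have h1 := key i n (fun j => (C j).image σ) hcov2 hne2 B hB hBdisj
    have h2 := key i n C hcover hne B hB hBdisj
    calc (urnLaw ν ψ ψ0 ξ i) {v : Fin i → 𝓧 |
          (∀ j, ∀ l ∈ C j, (v ∘ σ) l ∈ B j) ∧
          (∀ l m : Fin i, (v ∘ σ) l = (v ∘ σ) m ↔ ∃ j, l ∈ C j ∧ m ∈ C j)}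
        = (urnLaw ν ψ ψ0 ξ i) (UrnAux.urnEvent (fun j => (C j).image σ) B) := by rw [hset]
      _ = (∏ k ∈ Finset.range (i - 1), (ξ (k+1) : ℝ≥0∞))⁻¹ *
            (∏ k ∈ Finset.range (n - 1), (ψ0 (k+1) : ℝ≥0∞)) *
            ∏ j : Fin n, (ν (B j) *
              ∏ m ∈ Finset.range (((C j).image σ).card - 1), (ψ (m+1) : ℝ≥0∞)) := h1
      _ = (∏ k ∈ Finset.range (i - 1), (ξ (k+1) : ℝ≥0∞))⁻¹ *
            (∏ k ∈ Finset.range (n - 1), (ψ0 (k+1) : ℝ≥0∞)) *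
            ∏ j : Fin n, (ν (B j) *
              ∏ m ∈ Finset.range ((C j).card - 1), (ψ (m+1) : ℝ≥0∞)) := by
          congr 1
          refine Finset.prod_congr rfl fun j _ => ?_
          rw [Finset.card_image_of_injective _ σ.injective]
      _ = (urnLaw ν ψ ψ0 ξ i) {v : Fin i → 𝓧 |
            (∀ j, ∀ l ∈ C j, v l ∈ B j) ∧
            (∀ l m : Fin i, v l = v m ↔ ∃ j, l ∈ C j ∧ m ∈ C j)} :=
          (key i n C hcover hne B hB hBdisj).symm
end

section
/- Let X_1, X_2, ... be an exchangeable sequence directed (via de Finetti) by a random probability measure P*. If a_i := P{X_{i+1} ∉ {X_1,...,X_i}} → 0 as i → ∞, then P* is almost surely a discrete probability measure. -/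
open MeasureTheory ProbabilityTheory ENNReal Filter

open scoped Classical

open MeasureTheory ProbabilityTheory ENNReal Filter
open scoped Classical

namespace KingmanAux

variable {𝓧 : Type*}

/-- Partition piece at level `m` indexed by a boolean pattern. -/
def sepPart (B : ℕ → Set 𝓧) (m : ℕ) (f : Fin m → Bool) : Set 𝓧 :=
  {y | ∀ n : Fin m, (y ∈ B (n : ℕ) ↔ f n = true)}

/-- Partition cell at level `m` containing `x`. -/
def sepCell (B : ℕ → Set 𝓧) (m : ℕ) (x : 𝓧) : Set 𝓧 :=
  {y | ∀ n < m, (y ∈ B n ↔ x ∈ B n)}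

lemma mem_sepCell_self (B : ℕ → Set 𝓧) (m : ℕ) (x : 𝓧) : x ∈ sepCell B m x :=
  fun _ _ => Iff.rfl

lemma sepCell_antitone (B : ℕ → Set 𝓧) (x : 𝓧) : Antitone (fun m => sepCell B m x) := by
  intro a b hab y hy n hn
  exact hy n (lt_of_lt_of_le hn hab)

lemma sepCell_eq_sepPart (B : ℕ → Set 𝓧) (m : ℕ) (x : 𝓧) :
    sepCell B m x = sepPart B m (fun n => decide (x ∈ B (n : ℕ))) := by
  ext y
  constructor
  · intro h n
    simpa using (h n n.2)
  · intro h n hn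
    simpa using (h ⟨n, hn⟩)

lemma sepPart_eq_iInter (B : ℕ → Set 𝓧) (m : ℕ) (f : Fin m → Bool) :
    sepPart B m f = ⋂ n : Fin m, (if f n = true then B (n : ℕ) else (B (n : ℕ))ᶜ) := by
  ext y
  simp only [sepPart, Set.mem_setOf_eq, Set.mem_iInter]
  refine forall_congr' fun n => ?_
  by_cases h : f n = true <;> simp [h]

lemma measurableSet_sepPart [MeasurableSpace 𝓧] {B : ℕ → Set 𝓧}
    (hB : ∀ n, MeasurableSet (B n)) (m : ℕ) (f : Fin m → Bool) :
    MeasurableSet (sepPart B m f) := by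
  rw [sepPart_eq_iInter]
  refine MeasurableSet.iInter fun n => ?_
  by_cases h : f n = true <;> simp [h, hB, (hB _).compl]

lemma measurableSet_sepCell [MeasurableSpace 𝓧] {B : ℕ → Set 𝓧}
    (hB : ∀ n, MeasurableSet (B n)) (m : ℕ) (x : 𝓧) :
    MeasurableSet (sepCell B m x) := by
  rw [sepCell_eq_sepPart]; exact measurableSet_sepPart hB _ _

lemma sepPart_disjoint (B : ℕ → Set 𝓧) (m : ℕ) {f g : Fin m → Bool} (hfg : f ≠ g) :
    Disjoint (sepPart B m f) (sepPart B m g) := by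
  rw [Set.disjoint_left]
  intro y hyf hyg
  apply hfg
  funext n
  have h1 := hyf n
  have h2 := hyg n
  rcases Bool.eq_false_or_eq_true (f n) with h | h <;>
    rcases Bool.eq_false_or_eq_true (g n) with h' | h' <;> simp_all

lemma mem_sepPart_self (B : ℕ → Set 𝓧) (m : ℕ) (x : 𝓧) :
    x ∈ sepPart B m (fun n => decide (x ∈ B (n : ℕ))) := by
  rw [← sepCell_eq_sepPart]; exact mem_sepCell_self B m x

/-- A separating countable family of measurable sets in a separable metric space. -/
lemma exists_separating_family [MetricSpace 𝓧] [TopologicalSpace.SeparableSpace 𝓧]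
    [Nonempty 𝓧] [MeasurableSpace 𝓧] [BorelSpace 𝓧] :
    ∃ B : ℕ → Set 𝓧, (∀ n, MeasurableSet (B n)) ∧
      ∀ x y : 𝓧, x ≠ y → ∃ n, x ∈ B n ∧ y ∉ B n := by
  set u := TopologicalSpace.denseSeq 𝓧
  refine ⟨fun n => Metric.ball (u n.unpair.1) (1 / (n.unpair.2 + 1)),
    fun n => Metric.isOpen_ball.measurableSet, fun x y hxy => ?_⟩
  set d := dist x y with hd
  have hd0 : 0 < d := dist_pos.2 hxy
  obtain ⟨j, hj⟩ := exists_nat_one_div_lt (show (0:ℝ) < d/3 by linarith)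
  have hjpos : (0:ℝ) < 1 / (j + 1) := by positivity
  obtain ⟨k, hk⟩ := Metric.denseRange_iff.1 (TopologicalSpace.denseRange_denseSeq 𝓧) x
    (1 / (2 * (j + 1))) (by positivity)
  refine ⟨Nat.pair k j, ?_, ?_⟩
  · simp only [Nat.unpair_pair]
    have : dist x (u k) < 1 / (j+1) := by
      have : (1:ℝ) / (2 * (j + 1)) ≤ 1 / (j+1) := by
        rw [div_le_div_iff₀ (by positivity) (by positivity)]; nlinarith
      calc dist x (u k) < 1 / (2 * (j+1)) := hk
        _ ≤ 1 / (j+1) := this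
    simpa [Metric.mem_ball, dist_comm] using this
  · simp only [Nat.unpair_pair]
    intro hy
    rw [Metric.mem_ball] at hy
    have h1 : dist x (u k) < 1 / (2 * (j+1)) := hk
    have h2 : (1:ℝ) / (2*(j+1)) ≤ d/3 := by
      have := hj
      rw [div_le_div_iff₀ (by positivity) (by norm_num)]
      rw [div_lt_div_iff₀ (by positivity) (by norm_num)] at hj
      nlinarith
    have h3 : dist (u k) y < d / 3 := by
      rw [dist_comm y (u k)] at hy
      exact hy.trans hj
    have : d < d/3 + d/3 :=
      calc d ≤ dist x (u k) + dist (u k) y := dist_triangle x (u k) y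
        _ < d/3 + d/3 := add_lt_add (h1.trans_le h2) h3
    linarith

/-- The cells shrink to the singleton. -/
lemma iInter_sepCell {B : ℕ → Set 𝓧}
    (hsep : ∀ x y : 𝓧, x ≠ y → ∃ n, x ∈ B n ∧ y ∉ B n) (x : 𝓧) :
    ⋂ m, sepCell B m x = {x} := by
  apply Set.Subset.antisymm
  · intro y hy
    simp only [Set.mem_iInter] at hy
    by_contra hyx
    obtain ⟨n, hxn, hyn⟩ := hsep x y (fun h => hyx (h ▸ rfl))
    exact hyn (((hy (n+1)) n (Nat.lt_succ_self n)).2 hxn)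
  · intro y hy
    simp only [Set.mem_singleton_iff] at hy
    subst hy
    exact Set.mem_iInter.2 fun m => mem_sepCell_self B m y

end KingmanAux

open KingmanAux

/-- **Kingman's theorem.**  Let `X₁, X₂, …` be an exchangeable sequence on a complete
separable metric space, directed (via de Finetti) by a random probability measure `P*`:
the joint law of any finite initial segment is the `Pm`-mixture of i.i.d. laws `P* ω`.
If `a_i = P{X_{i+1} ∉ {X₁,…,X_i}} → 0` as `i → ∞`, then `P*` is almost surely a discrete
probability measure, i.e. almost surely carried by a countable set of points. -/
theorem directing_measure_discrete_of_new_value_prob_vanishes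
    {Ω : Type*} [MeasurableSpace Ω] (Pm : Measure Ω) [IsProbabilityMeasure Pm]
    {𝓧 : Type*} [MetricSpace 𝓧] [CompleteSpace 𝓧] [TopologicalSpace.SeparableSpace 𝓧]
    [MeasurableSpace 𝓧] [BorelSpace 𝓧]
    (X : ℕ → Ω → 𝓧) (hX : ∀ n, Measurable (X n))
    (P : Ω → Measure 𝓧) (hPprob : ∀ᵐ ω ∂Pm, IsProbabilityMeasure (P ω))
    (hPmeas : ∀ A : Set 𝓧, MeasurableSet A → Measurable fun ω => P ω A)
    (hdir : ∀ (i : ℕ) (A : Fin i → Set 𝓧), (∀ j, MeasurableSet (A j)) →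
      Pm {ω | ∀ j : Fin i, X j ω ∈ A j} = ∫⁻ ω, ∏ j : Fin i, P ω (A j) ∂Pm)
    (hnew : Tendsto (fun i : ℕ => Pm {ω | ∀ j : Fin i, X i ω ≠ X (j : ℕ) ω})
      atTop (nhds 0)) :
    ∀ᵐ ω ∂Pm, ∃ s : Set 𝓧, s.Countable ∧ P ω sᶜ = 0 := by
  rcases isEmpty_or_nonempty 𝓧 with hE | hNE
  · filter_upwards with ω
    refine ⟨∅, Set.countable_empty, ?_⟩
    rw [Set.eq_empty_of_isEmpty ((∅ : Set 𝓧)ᶜ)]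
    simp
  obtain ⟨B, hBm, hBsep⟩ := KingmanAux.exists_separating_family (𝓧 := 𝓧)
  set G : ℕ → ℕ → Ω → ℝ≥0∞ := fun i m ω =>
    ∑ f : Fin m → Bool, P ω (sepPart B m f) * (P ω ((sepPart B m f)ᶜ))^i with hGdef
  -- pointwise representation of the cell function as a finite sum of indicators
  have hptwise : ∀ (m i : ℕ) (ω : Ω), (fun x : 𝓧 => (P ω ((sepCell B m x)ᶜ))^i)
      = fun x => ∑ f : Fin m → Bool,
          (sepPart B m f).indicator (fun _ => (P ω ((sepPart B m f)ᶜ))^i) x := by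
    intro m i ω
    funext x
    have hx : x ∈ sepPart B m (fun n => decide (x ∈ B (n : ℕ))) := mem_sepPart_self B m x
    rw [Finset.sum_eq_single_of_mem (fun n : Fin m => decide (x ∈ B (n : ℕ))) (Finset.mem_univ _)]
    · rw [Set.indicator_of_mem hx, sepCell_eq_sepPart]
    · intro g _ hg
      refine Set.indicator_of_notMem ?_ _
      intro hxg
      exact (Set.disjoint_left.1 (sepPart_disjoint B m hg)) hxg hx
  have hxmeas : ∀ (m i : ℕ) (ω : Ω), Measurable (fun x : 𝓧 => (P ω ((sepCell B m x)ᶜ))^i) := by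
    intro m i ω
    rw [hptwise m i ω]
    exact Finset.measurable_sum _ fun f _ =>
      (measurable_const.indicator (measurableSet_sepPart hBm m f))
  have hGint : ∀ (i m : ℕ) (ω : Ω), G i m ω = ∫⁻ x, (P ω ((sepCell B m x)ᶜ))^i ∂(P ω) := by
    intro i m ω
    rw [hptwise m i ω, lintegral_finset_sum _ (fun f _ =>
      measurable_const.indicator (measurableSet_sepPart hBm m f))]
    simp_rw [lintegral_indicator_const (measurableSet_sepPart hBm m _)]
    simp [hGdef, mul_comm]
  have hGmeas : ∀ i m, Measurable (G i m) := by
    intro i m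
    exact Finset.measurable_sum _ fun f _ =>
      ((hPmeas _ (measurableSet_sepPart hBm m f)).mul
        ((hPmeas _ (measurableSet_sepPart hBm m f).compl).pow_const i))
  have hGmono : ∀ (i : ℕ) (ω : Ω), Monotone fun m => G i m ω := by
    intro i ω a b hab
    show G i a ω ≤ G i b ω
    rw [hGint i a ω, hGint i b ω]
    refine lintegral_mono fun x => ?_
    refine pow_le_pow_left' (measure_mono (Set.compl_subset_compl.2 ?_)) i
    exact sepCell_antitone B x hab
  -- the crucial link with the directing identity
  have hGle : ∀ i m, ∫⁻ ω, G i m ω ∂Pm ≤ Pm {ω | ∀ j : Fin i, X i ω ≠ X (j : ℕ) ω} := by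
    intro i m
    set R : (Fin m → Bool) → Set Ω := fun f =>
      (X i ⁻¹' sepPart B m f) ∩ ⋂ j : Fin i, X (j : ℕ) ⁻¹' (sepPart B m f)ᶜ with hRdef
    have hRmeas : ∀ f, MeasurableSet (R f) :=
      fun f => ((hX i) (measurableSet_sepPart hBm m f)).inter
        (MeasurableSet.iInter fun j => (hX j) (measurableSet_sepPart hBm m f).compl)
    have hRdisj : Pairwise (Function.onFun Disjoint R) := by
      intro f g hfg
      rw [Function.onFun, Set.disjoint_left]
      rintro ω ⟨h1, -⟩ ⟨h2, -⟩
      exact (Set.disjoint_left.1 (sepPart_disjoint B m hfg)) h1 h2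
    have hRval : ∀ f, Pm (R f)
        = ∫⁻ ω, P ω (sepPart B m f) * (P ω ((sepPart B m f)ᶜ))^i ∂Pm := by
      intro f
      set A : Fin (i+1) → Set 𝓧 := fun j =>
        if (j : ℕ) < i then (sepPart B m f)ᶜ else sepPart B m f with hAdef
      have hAmeas : ∀ j, MeasurableSet (A j) := by
        intro j
        by_cases hj : (j : ℕ) < i <;>
          simp [hAdef, hj, measurableSet_sepPart hBm m f,
            (measurableSet_sepPart hBm m f).compl]
      have hEvent : {ω | ∀ j : Fin (i+1), X (j : ℕ) ω ∈ A j} = R f := by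
        ext ω
        simp only [Set.mem_setOf_eq, hRdef, Set.mem_inter_iff, Set.mem_preimage,
          Set.mem_iInter]
        constructor
        · intro h
          constructor
          · have := h (Fin.last i)
            simpa [hAdef, Fin.val_last] using this
          · intro j
            have := h (Fin.castSucc j)
            simpa [hAdef, Fin.coe_castSucc, j.2] using this
        · rintro ⟨h1, h2⟩ j
          by_cases hj : (j : ℕ) < i
          · have := h2 ⟨(j : ℕ), hj⟩
            simpa [hAdef, hj] using this
          · have hji : (j : ℕ) = i := le_antisymm (Nat.lt_succ_iff.1 j.2) (not_lt.1 hj)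
            simp only [hAdef, hj, if_false]
            rw [hji]
            exact h1
      have hProd : ∀ ω, ∏ j : Fin (i+1), P ω (A j)
          = (P ω ((sepPart B m f)ᶜ))^i * P ω (sepPart B m f) := by
        intro ω
        rw [Fin.prod_univ_castSucc]
        congr 1
        · have hc : ∀ j : Fin i, P ω (A (Fin.castSucc j)) = P ω ((sepPart B m f)ᶜ) := by
            intro j
            have hj : ((Fin.castSucc j : Fin (i+1)) : ℕ) < i := by
              simpa [Fin.coe_castSucc] using j.2
            simp [hAdef, hj]
          rw [Finset.prod_congr rfl fun j _ => hc j]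
          simp [Finset.prod_const, Finset.card_univ]
        · simp [hAdef, Fin.val_last]
      have := hdir (i+1) A hAmeas
      rw [hEvent] at this
      rw [this]
      refine lintegral_congr fun ω => ?_
      rw [hProd ω, mul_comm]
    have hUnion : Pm (⋃ f : Fin m → Bool, R f) = ∑ f : Fin m → Bool, Pm (R f) := by
      rw [measure_iUnion hRdisj hRmeas, tsum_fintype]
    have hsub : (⋃ f : Fin m → Bool, R f) ⊆ {ω | ∀ j : Fin i, X i ω ≠ X (j : ℕ) ω} := by
      rintro ω hω
      obtain ⟨f, hf⟩ := Set.mem_iUnion.1 hω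
      obtain ⟨h1, h2⟩ := hf
      intro j heq
      exact (Set.mem_iInter.1 h2 j) (heq ▸ h1)
    calc ∫⁻ ω, G i m ω ∂Pm
        = ∑ f : Fin m → Bool, ∫⁻ ω, P ω (sepPart B m f) * (P ω ((sepPart B m f)ᶜ))^i ∂Pm := by
          rw [hGdef]
          exact lintegral_finset_sum _ fun f _ =>
            ((hPmeas _ (measurableSet_sepPart hBm m f)).mul
              ((hPmeas _ (measurableSet_sepPart hBm m f).compl).pow_const i))
      _ = ∑ f : Fin m → Bool, Pm (R f) := by
          refine Finset.sum_congr rfl fun f _ => (hRval f).symm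
      _ = Pm (⋃ f : Fin m → Bool, R f) := hUnion.symm
      _ ≤ _ := measure_mono hsub
  set φ : Ω → ℝ≥0∞ := fun ω => ⨅ i, ⨆ m, G i m ω with hφdef
  have hφmeas : Measurable φ :=
    Measurable.iInf fun i => Measurable.iSup fun m => hGmeas i m
  have hφ0 : ∀ᵐ ω ∂Pm, φ ω = 0 := by
    have hle : ∀ i, ∫⁻ ω, φ ω ∂Pm ≤ Pm {ω | ∀ j : Fin i, X i ω ≠ X (j : ℕ) ω} := by
      intro i
      calc ∫⁻ ω, φ ω ∂Pm ≤ ∫⁻ ω, ⨆ m, G i m ω ∂Pm := lintegral_mono fun ω => iInf_le _ i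
        _ = ⨆ m, ∫⁻ ω, G i m ω ∂Pm := lintegral_iSup (fun m => hGmeas i m)
            (fun a b hab ω => hGmono i ω hab)
        _ ≤ _ := iSup_le fun m => hGle i m
    have h0 : ∫⁻ ω, φ ω ∂Pm = 0 :=
      le_antisymm (ge_of_tendsto' hnew hle) (zero_le)
    exact (lintegral_eq_zero_iff hφmeas).1 h0
  filter_upwards [hPprob, hφ0] with ω hprob hφω
  -- the set of atoms is countable
  have hcount : Set.Countable {x : 𝓧 | P ω {x} ≠ 0} := by
    have := MeasureTheory.Measure.countable_meas_pos_of_disjoint_of_meas_iUnion_ne_top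
      (μ := P ω) (As := fun x : 𝓧 => ({x} : Set 𝓧))
      (fun x => measurableSet_singleton x)
      (fun x y hxy => by simp [Function.onFun, Set.disjoint_singleton, hxy])
      (by exact (measure_lt_top (P ω) _).ne)
    refine this.mono fun x hx => ?_
    simpa [pos_iff_ne_zero] using hx
  refine ⟨{x : 𝓧 | P ω {x} ≠ 0}, hcount, ?_⟩
  have hN : MeasurableSet ({x : 𝓧 | P ω {x} ≠ 0}ᶜ) := hcount.measurableSet.compl
  -- show the non-atomic part has measure ≤ φ ω = 0
  have key : P ω ({x : 𝓧 | P ω {x} ≠ 0}ᶜ) ≤ φ ω := by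
    refine le_iInf fun i => ?_
    have step1 : P ω ({x : 𝓧 | P ω {x} ≠ 0}ᶜ)
        = ∫⁻ x, ({x : 𝓧 | P ω {x} ≠ 0}ᶜ).indicator (fun _ => 1) x ∂(P ω) := by
      rw [lintegral_indicator_const hN, one_mul]
    rw [step1]
    have step2 : ∫⁻ x, ({x : 𝓧 | P ω {x} ≠ 0}ᶜ).indicator (fun _ => 1) x ∂(P ω)
        ≤ ∫⁻ x, ⨆ m, (P ω ((sepCell B m x)ᶜ))^i ∂(P ω) := by
      refine lintegral_mono fun x => ?_
      by_cases hx : x ∈ ({x : 𝓧 | P ω {x} ≠ 0}ᶜ)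
      · rw [Set.indicator_of_mem hx]
        have hx0 : P ω {x} = 0 := by simpa using hx
        have hmono : Monotone fun m => (sepCell B m x)ᶜ := fun a b hab =>
          Set.compl_subset_compl.2 (sepCell_antitone B x hab)
        have hU : ⋃ m, (sepCell B m x)ᶜ = ({x} : Set 𝓧)ᶜ := by
          rw [← Set.compl_iInter, iInter_sepCell hBsep x]
        have htt : Tendsto (fun m => P ω ((sepCell B m x)ᶜ)) atTop (nhds (P ω ({x}ᶜ))) := by
          rw [← hU]; exact tendsto_measure_iUnion_atTop hmono
        have hc : P ω ({x}ᶜ) = 1 := by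
          rw [measure_compl (measurableSet_singleton x) (measure_ne_top _ _), hx0,
            measure_univ, tsub_zero]
        rw [hc] at htt
        have htt2 : Tendsto (fun m => (P ω ((sepCell B m x)ᶜ))^i) atTop (nhds 1) := by
          have := ((ENNReal.continuous_pow i).tendsto 1).comp htt
          simpa [Function.comp_def] using this
        exact le_of_tendsto' htt2 fun m => le_iSup (fun m => (P ω ((sepCell B m x)ᶜ))^i) m
      · rw [Set.indicator_of_notMem hx]; exact zero_le
    refine step2.trans ?_
    rw [lintegral_iSup (fun m => hxmeas m i ω)
      (fun a b hab x => pow_le_pow_left' (measure_mono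
        (Set.compl_subset_compl.2 (sepCell_antitone B x hab))) i)]
    refine iSup_le fun m => ?_
    rw [← hGint i m ω]
    exact le_iSup (fun m => G i m ω) m
  exact le_antisymm (le_trans key (le_of_eq hφω)) (zero_le)
end

section
/- If ψ, ψ₀, ξ satisfy ψ₀(n(p)) + ∑_{j=1}^{n(p)} ψ(e_j) = ξ(i) for every partition p of {1,...,i} and every i ≥ 1, and if partitions with at least two blocks of arbitrary sizes occur (e.g., ψ₀(k) > 0 for all k < some bound), then ψ must be affine: there exist constants a, b with ψ(e) = a·e + b for all sizes e that actually occur, and correspondingly ψ₀(n) = ξ(i) - a·i - b·n. -/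
/-!
Compare the two partitions with block sizes `{e + 1, f}` and `{e, f + 1}`: they have the same
number of blocks and the same total, so the condition forces
`ψ (e + 1) - ψ e = ψ (f + 1) - ψ f`. Hence `ψ` has constant increments on `e ≥ 1` and is affine
there. Feeding this back into the condition on a partition with `n` blocks of total size `i`
(one block of size `i - n + 1`, the rest singletons) expresses `ψ0 n`.
-/

/-- A partition of `{1, …, i}` is recorded by the multiset of its block sizes. -/
def ExchangeabilityCondition (ψ ψ0 ξ : ℕ → ℝ) : Prop :=
  ∀ s : Multiset ℕ, (∀ e ∈ s, 0 < e) → s ≠ 0 → ψ0 (Multiset.card s) + (s.map ψ).sum = ξ s.sum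

namespace ExchangeabilityCondition

variable {ψ ψ0 ξ : ℕ → ℝ}

theorem add_succ_eq_succ_add (hEC : ExchangeabilityCondition ψ ψ0 ξ) {e f : ℕ}
    (he : 0 < e) (hf : 0 < f) : ψ (e + 1) + ψ f = ψ e + ψ (f + 1) := by
  have h₁ := hEC {e + 1, f} (by simp [hf]) (by simp)
  have h₂ := hEC {e, f + 1} (by simp [he]) (by simp)
  have hsum : ({e + 1, f} : Multiset ℕ).sum = ({e, f + 1} : Multiset ℕ).sum := by
    simp only [Multiset.insert_eq_cons, Multiset.sum_cons, Multiset.sum_singleton]; omega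
  rw [hsum] at h₁
  simp only [Multiset.insert_eq_cons, Multiset.card_cons, Multiset.card_singleton,
    Multiset.map_cons, Multiset.map_singleton, Multiset.sum_cons, Multiset.sum_singleton] at h₁ h₂
  linarith

end ExchangeabilityCondition

theorem Nat.eq_mul_add_of_succ_eq_add {R : Type*} [CommRing R] {f : ℕ → R} {d : R}
    (h : ∀ e, 1 ≤ e → f (e + 1) = f e + d) : ∀ e, 1 ≤ e → f e = d * e + (f 1 - d) := by
  intro e he
  induction e, he using Nat.le_induction with
  | base => simp
  | succ e he ih => rw [h e he, ih]; push_cast; ring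

theorem Multiset.sum_map_eq_mul_sum_add_mul_card {R : Type*} [CommRing R] {ψ : ℕ → R} {a b : R}
    {s : Multiset ℕ} (h : ∀ e ∈ s, ψ e = a * e + b) :
    (s.map ψ).sum = a * s.sum + b * Multiset.card s := by
  rw [Multiset.map_congr rfl h, Multiset.sum_map_add, Multiset.sum_map_mul_left,
    Multiset.map_const', Multiset.sum_replicate, nsmul_eq_mul, Nat.cast_multiset_sum, mul_comm b]

theorem Multiset.exists_pos_card_eq_sum_eq {n i : ℕ} (hn : 1 ≤ n) (hi : n ≤ i) :
    ∃ s : Multiset ℕ, (∀ e ∈ s, 0 < e) ∧ Multiset.card s = n ∧ s.sum = i :=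
  ⟨(i - n + 1) ::ₘ Multiset.replicate (n - 1) 1,
    by simp +contextual [Multiset.mem_replicate],
    by simp only [Multiset.card_cons, Multiset.card_replicate]; omega,
    by simp only [Multiset.sum_cons, Multiset.sum_replicate, smul_eq_mul, mul_one]; omega⟩

/-- **Characterization of the urn weights.**  Suppose the weights satisfy the
Exchangeability Condition constraint `ψ₀(n(p)) + ∑_{j=1}^{n(p)} ψ(e_j) = ξ(i)` for every
nonempty partition of `{1,…,i}` (encoded as a multiset of positive block sizes) and every
`i ≥ 1` — in particular partitions with at least two blocks of arbitrary sizes occur.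
Then `ψ` must be affine: there are constants `a, b` with `ψ(e) = a·e + b` for all
occurring block sizes `e ≥ 1`, and correspondingly `ψ₀(n) = ξ(i) − a·i − b·n` for all
`1 ≤ n ≤ i`. -/
theorem urn_weights_affine (ψ ψ0 ξ : ℕ → ℝ)
    (hEC : ∀ s : Multiset ℕ, (∀ e ∈ s, 0 < e) → s ≠ 0 →
      ψ0 (Multiset.card s) + (s.map ψ).sum = ξ s.sum) :
    ∃ a b : ℝ,
      (∀ e : ℕ, 1 ≤ e → ψ e = a * e + b) ∧
      (∀ n i : ℕ, 1 ≤ n → n ≤ i → ψ0 n = ξ i - a * i - b * n) := by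
  have hEC : ExchangeabilityCondition ψ ψ0 ξ := hEC
  have hstep : ∀ e, 1 ≤ e → ψ (e + 1) = ψ e + (ψ 2 - ψ 1) := fun e he => by
    linarith [hEC.add_succ_eq_succ_add he one_pos]
  have haff := Nat.eq_mul_add_of_succ_eq_add hstep
  refine ⟨_, _, haff, fun n i hn hi => ?_⟩
  obtain ⟨s, hpos, rfl, rfl⟩ := Multiset.exists_pos_card_eq_sum_eq hn hi
  have h := hEC s hpos (Multiset.card_pos.mp hn)
  rw [Multiset.sum_map_eq_mul_sum_add_mul_card fun e he => haff e (hpos e he)] at h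
  linarith
end
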